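/- arXiv:1804.00612 — 5 statements merged into one kernel-verified Lean document; each statement's English description precedes it below -/
import Mathlib

section
/- Let X be a Banach space, b > 0, I = [0,b], 0 = t₀ < t₁ < ⋯ < t_m < t_{m+1} = b, and PC(I,X) the Banach space of bounded functions x : I → X continuous on each (t_i, t_{i+1}] with right limits x(t_i⁺) existing, normed by ‖x‖_{PC} = sup_{t∈I}‖x(t)‖. Let (S(t))_{t∈I} be a family of bounded linear operators on X with sup_{t∈I}‖S(t)‖ ≤ M, let g : PC(I,X) → X satisfy ‖g(x) − g(y)‖ ≤ β‖x − y‖_{PC}, let I_i : X → X (i = 1,…,m) satisfy ‖I_i(x(t_i⁻)) − I_i(y(t_i⁻))‖ ≤ d_i sup_{t∈(t_i,t_{i+1}]}‖x(t) − y(t)‖ for all x, y ∈ PC(I,X), and fix x₀ ∈ X and w₁,…,w_m ∈ X. Define (Q₁x)(t) = S(t)(x₀ − g(x)) for t ∈ [0,t₁] and (Q₁x)(t) = S(t − t_i)[x(t_i⁻) + I_i(x(t_i⁻)) + w_i] for t ∈ (t_i, t_{i+1}], i = 1,…,m. If Mβ < 1 and M(1 + d_i) < 1 for every i = 1,…,m,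 then Q₁ : PC(I,X) → PC(I,X) is a contraction: ‖Q₁x − Q₁y‖_{PC} ≤ c‖x − y‖_{PC} with c = max{Mβ, max_i M(1 + d_i)} < 1. -/
lemma myBiSupConst {α : Type*} {A : Set α} (hA : A.Nonempty) {c : ℝ} (hc : 0 ≤ c) :
    (⨆ s ∈ A, c) = c := by
  apply le_antisymm
  · exact Real.iSup_le (fun s => Real.iSup_le (fun _ => le_rfl) hc) hc
  · obtain ⟨s, hs⟩ := hA
    have h1 : (⨆ _ : s ∈ A, c) = c := by
      haveI : Nonempty (s ∈ A) := ⟨hs⟩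
      exact ciSup_const
    have hbdd : BddAbove (Set.range fun s : α => ⨆ _ : s ∈ A, c) := by
      refine ⟨c, ?_⟩
      rintro r ⟨t, rfl⟩
      exact Real.iSup_le (fun _ => le_rfl) hc
    calc c = ⨆ _ : s ∈ A, c := h1.symm
      _ ≤ ⨆ t ∈ A, c := le_ciSup hbdd s

lemma myTransition (P : ℕ → Prop) (m : ℕ) (h1 : P 1) (h2 : ¬ P (m + 1)) :
    ∃ i, 1 ≤ i ∧ i ≤ m ∧ P i ∧ ¬ P (i + 1) := by
  induction m with
  | zero => exact absurd h1 h2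
  | succ n ih =>
    by_cases hp : P (n + 1)
    · exact ⟨n + 1, by omega, by omega, hp, h2⟩
    · obtain ⟨i, hi1, hi2, hi3, hi4⟩ := ih hp
      exact ⟨i, hi1, by omega, hi3, hi4⟩


/-- Membership in the space `PC(I, X)` of piecewise-continuous functions on `I = [0, b]`
relative to the partition `0 = t 0 < t 1 < ⋯ < t m < t (m+1) = b`: bounded on `I`,
continuous on each `(t i, t (i+1)]`, and with right limits at each `t i`. -/
def IsPC {X : Type*} [NormedAddCommGroup X]
    (b : ℝ) (m : ℕ) (tt : ℕ → ℝ) (x : ℝ → X) : Prop :=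
  (∃ C : ℝ, ∀ s ∈ Set.Icc (0:ℝ) b, ‖x s‖ ≤ C) ∧
  (∀ i ≤ m, ContinuousOn x (Set.Ioc (tt i) (tt (i + 1)))) ∧
  (∀ i ≤ m, ∃ L : X, Filter.Tendsto x (nhdsWithin (tt i) (Set.Ioi (tt i))) (nhds L))

lemma isPC_const {X : Type*} [NormedAddCommGroup X]
    (b : ℝ) (m : ℕ) (tt : ℕ → ℝ) (v : X) : IsPC b m tt (fun _ => v) :=
  ⟨⟨‖v‖, fun _ _ => le_rfl⟩, fun _ _ => continuousOn_const, fun _ _ => ⟨v, tendsto_const_nhds⟩⟩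


/-- The paper's operator `Q₁`, defined by `(Q₁x)(t) = S(t)(x₀ - g(x))` on `[0, t₁]` and
`(Q₁x)(t) = S(t - tᵢ)[x(tᵢ⁻) + Iᵢ(x(tᵢ⁻)) + wᵢ]` on `(tᵢ, tᵢ₊₁]`, is a contraction on
`PC(I,X)` with constant `c = max (Mβ) (maxᵢ M(1 + dᵢ)) < 1`, provided `Mβ < 1` and
`M(1 + dᵢ) < 1` for all `i`. -/
theorem Q1_is_contraction
    {X : Type*} [NormedAddCommGroup X] [NormedSpace ℝ X]
    (b : ℝ) (hb : 0 < b) (m : ℕ) (hm : 1 ≤ m)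
    (tt : ℕ → ℝ) (ht0 : tt 0 = 0) (htb : tt (m + 1) = b)
    (ht_mono : ∀ i j : ℕ, i < j → j ≤ m + 1 → tt i < tt j)
    (M β : ℝ)
    (S : ℝ → X →L[ℝ] X) (hS : ∀ t ∈ Set.Icc (0:ℝ) b, ‖S t‖ ≤ M)
    (g : (ℝ → X) → X)
    (hg : ∀ x y : ℝ → X, IsPC b m tt x → IsPC b m tt y →
      ‖g x - g y‖ ≤ β * ⨆ s ∈ Set.Icc (0:ℝ) b, ‖x s - y s‖)
    (d : ℕ → ℝ) (Imp : ℕ → X → X)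
    (hImp : ∀ i, 1 ≤ i → i ≤ m → ∀ x y : ℝ → X, IsPC b m tt x → IsPC b m tt y →
      ‖Imp i (x (tt i)) - Imp i (y (tt i))‖
        ≤ d i * ⨆ s ∈ Set.Ioc (tt i) (tt (i + 1)), ‖x s - y s‖)
    (x₀ : X) (w : ℕ → X)
    (Q₁ : (ℝ → X) → ℝ → X)
    (hQ₁a : ∀ x : ℝ → X, ∀ t ∈ Set.Icc (0:ℝ) (tt 1), Q₁ x t = S t (x₀ - g x))
    (hQ₁b : ∀ x : ℝ → X, ∀ i, 1 ≤ i → i ≤ m → ∀ t ∈ Set.Ioc (tt i) (tt (i + 1)),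
      Q₁ x t = S (t - tt i) (x (tt i) + Imp i (x (tt i)) + w i))
    (hMβ : M * β < 1)
    (hMd : ∀ i, 1 ≤ i → i ≤ m → M * (1 + d i) < 1) :
    ∃ c : ℝ,
      c = max (M * β)
        ((Finset.Icc 1 m).sup' (Finset.nonempty_Icc.mpr hm) (fun i => M * (1 + d i))) ∧
      c < 1 ∧
      ∀ x y : ℝ → X, IsPC b m tt x → IsPC b m tt y →
        (⨆ s ∈ Set.Icc (0:ℝ) b, ‖Q₁ x s - Q₁ y s‖)
          ≤ c * ⨆ s ∈ Set.Icc (0:ℝ) b, ‖x s - y s‖ := by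
  refine ⟨max (M * β)
      ((Finset.Icc 1 m).sup' (Finset.nonempty_Icc.mpr hm) (fun i => M * (1 + d i))),
    rfl, ?_, ?_⟩
  · refine max_lt hMβ ((Finset.sup'_lt_iff _).mpr ?_)
    intro i hi
    obtain ⟨h1, h2⟩ := Finset.mem_Icc.mp hi
    exact hMd i h1 h2
  · intro x y hx hy
    set c := max (M * β)
        ((Finset.Icc 1 m).sup' (Finset.nonempty_Icc.mpr hm) (fun i => M * (1 + d i)))
      with hc
    rcases subsingleton_or_nontrivial X with hXs | hXn
    · have hz : ∀ a : X, ‖a‖ = 0 := fun a => by rw [Subsingleton.elim a 0, norm_zero]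
      simp only [hz, Real.iSup_const_zero, mul_zero, le_refl]
    -- nontrivial case
    have hM0 : 0 ≤ M := (norm_nonneg (S 0)).trans (hS 0 ⟨le_refl 0, hb.le⟩)
    have httb : ∀ j, j ≤ m + 1 → tt j ≤ b := by
      intro j hj
      rcases eq_or_lt_of_le hj with h | h
      · rw [h, htb]
      · rw [← htb]; exact (ht_mono j (m + 1) h le_rfl).le
    -- d i ≥ 0
    have hd : ∀ i, 1 ≤ i → i ≤ m → 0 ≤ d i := by
      intro i h1 h2
      obtain ⟨v, hv⟩ := exists_ne (0 : X)
      have hvpos : 0 < ‖v‖ := norm_pos_iff.mpr hv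
      have hb1 := hImp i h1 h2 (fun _ => (0 : X)) (fun _ => v)
        (isPC_const b m tt 0) (isPC_const b m tt v)
      have hne : (Set.Ioc (tt i) (tt (i + 1))).Nonempty :=
        Set.nonempty_Ioc.mpr (ht_mono i (i + 1) (lt_add_one i) (by omega))
      have hsup : (⨆ s ∈ Set.Ioc (tt i) (tt (i + 1)), ‖(0 : X) - v‖) = ‖v‖ := by
        simp only [zero_sub, norm_neg]
        exact myBiSupConst hne (norm_nonneg v)
      rw [hsup] at hb1
      nlinarith [norm_nonneg (Imp i (0 : X) - Imp i v)]
    have hc0 : 0 ≤ c := by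
      have h1 : M * (1 + d 1) ≤ c :=
        le_trans (Finset.le_sup' (fun i => M * (1 + d i)) (Finset.mem_Icc.mpr ⟨le_rfl, hm⟩)) (le_max_right _ _)
      have := hd 1 le_rfl hm
      nlinarith
    obtain ⟨Cx, hCx⟩ := hx.1
    obtain ⟨Cy, hCy⟩ := hy.1
    set N := (⨆ s ∈ Set.Icc (0:ℝ) b, ‖x s - y s‖) with hN
    have hbdd : BddAbove (Set.range fun s => ⨆ _ : s ∈ Set.Icc (0:ℝ) b, ‖x s - y s‖) := by
      refine ⟨max 0 (Cx + Cy), ?_⟩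
      rintro r ⟨s, rfl⟩
      refine Real.iSup_le (fun hs => le_max_of_le_right ?_) (le_max_left _ _)
      exact (norm_sub_le _ _).trans (add_le_add (hCx s hs) (hCy s hs))
    have hptw : ∀ s ∈ Set.Icc (0:ℝ) b, ‖x s - y s‖ ≤ N := by
      intro s hs
      haveI : Nonempty (s ∈ Set.Icc (0:ℝ) b) := ⟨hs⟩
      calc ‖x s - y s‖ = ⨆ _ : s ∈ Set.Icc (0:ℝ) b, ‖x s - y s‖ := ciSup_const.symm
        _ ≤ N := le_ciSup hbdd s
    have hN0 : 0 ≤ N := (norm_nonneg _).trans (hptw 0 ⟨le_rfl, hb.le⟩)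
    have hcN : 0 ≤ c * N := mul_nonneg hc0 hN0
    refine Real.iSup_le (fun s => Real.iSup_le (fun hs => ?_) hcN) hcN
    by_cases hst1 : s ≤ tt 1
    · -- Case [0, t₁]
      rw [hQ₁a x s ⟨hs.1, hst1⟩, hQ₁a y s ⟨hs.1, hst1⟩, ← map_sub]
      have heq : (x₀ - g x) - (x₀ - g y) = g y - g x := by abel
      rw [heq]
      have hg' := hg x y hx hy
      rw [← hN] at hg'
      calc ‖S s (g y - g x)‖ ≤ ‖S s‖ * ‖g y - g x‖ := (S s).le_opNorm _
        _ ≤ M * ‖g y - g x‖ := mul_le_mul_of_nonneg_right (hS s hs) (norm_nonneg _)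
        _ = M * ‖g x - g y‖ := by rw [norm_sub_rev]
        _ ≤ M * (β * N) := mul_le_mul_of_nonneg_left hg' hM0
        _ = (M * β) * N := by ring
        _ ≤ c * N := mul_le_mul_of_nonneg_right (le_max_left _ _) hN0
    · -- Case (tᵢ, tᵢ₊₁]
      push_neg at hst1
      obtain ⟨i, hi1, him, his, hsle'⟩ := myTransition (fun j => tt j < s) m hst1
        (by show ¬ tt (m + 1) < s; rw [htb]; exact not_lt.mpr hs.2)
      have hsle : s ≤ tt (i + 1) := not_lt.mp hsle'
      have hmemIoc : s ∈ Set.Ioc (tt i) (tt (i + 1)) := ⟨his, hsle⟩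
      have htti0 : 0 < tt i := by
        have := ht_mono 0 i (by omega) (by omega)
        rwa [ht0] at this
      have htip1b : tt (i + 1) ≤ b := httb (i + 1) (by omega)
      have hstti : s - tt i ∈ Set.Icc (0:ℝ) b :=
        ⟨by linarith, by linarith [hs.2]⟩
      rw [hQ₁b x i hi1 him s hmemIoc, hQ₁b y i hi1 him s hmemIoc, ← map_sub]
      have heq : (x (tt i) + Imp i (x (tt i)) + w i) - (y (tt i) + Imp i (y (tt i)) + w i)
          = (x (tt i) - y (tt i)) + (Imp i (x (tt i)) - Imp i (y (tt i))) := by abel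
      rw [heq]
      have hIocN : (⨆ s' ∈ Set.Ioc (tt i) (tt (i + 1)), ‖x s' - y s'‖) ≤ N :=
        Real.iSup_le (fun s' => Real.iSup_le
          (fun hs' => hptw s' ⟨(htti0.trans hs'.1).le, hs'.2.trans htip1b⟩) hN0) hN0
      have hImpB : ‖Imp i (x (tt i)) - Imp i (y (tt i))‖ ≤ d i * N :=
        (hImp i hi1 him x y hx hy).trans
          (mul_le_mul_of_nonneg_left hIocN (hd i hi1 him))
      have hxyN : ‖x (tt i) - y (tt i)‖ ≤ N :=
        hptw (tt i) ⟨htti0.le, by linarith [hs.2]⟩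
      have hMc : M * (1 + d i) ≤ c :=
        le_trans (Finset.le_sup' (fun i => M * (1 + d i)) (Finset.mem_Icc.mpr ⟨hi1, him⟩)) (le_max_right _ _)
      calc ‖S (s - tt i) ((x (tt i) - y (tt i)) + (Imp i (x (tt i)) - Imp i (y (tt i))))‖
          ≤ ‖S (s - tt i)‖ * ‖(x (tt i) - y (tt i)) + (Imp i (x (tt i)) - Imp i (y (tt i)))‖ :=
            (S _).le_opNorm _
        _ ≤ M * ‖(x (tt i) - y (tt i)) + (Imp i (x (tt i)) - Imp i (y (tt i)))‖ :=
            mul_le_mul_of_nonneg_right (hS _ hstti) (norm_nonneg _)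
        _ ≤ M * (‖x (tt i) - y (tt i)‖ + ‖Imp i (x (tt i)) - Imp i (y (tt i))‖) :=
            mul_le_mul_of_nonneg_left (norm_add_le _ _) hM0
        _ ≤ M * (N + d i * N) := mul_le_mul_of_nonneg_left (add_le_add hxyN hImpB) hM0
        _ = (M * (1 + d i)) * N := by ring
        _ ≤ c * N := mul_le_mul_of_nonneg_right hMc hN0
end

section
/- Let X be a Banach space, I = [0,b], 0 = t₀ < t₁ < ⋯ < t_{m+1} = b, and (T(t))_{t∈I} a family of bounded operators with sup_{t∈I}‖T(t)‖ ≤ M such that t ↦ T(t) is continuous on (0,b] in the operator norm. Assume f : I × X × X → X satisfies ‖f(t,x,y)‖ ≤ μ₁(t) + μ₂(t)‖x‖ + μ₃(t)‖y‖ with μ_i ∈ L^∞(I,ℝ≥0), (Hx)(t) = ∫₀ᵗ h(t,s,x(s)) ds with ‖h(t,s,z)‖ ≤ m(t,s)‖z‖, K_i* = sup_{t∈I} ∫_{t_{i−1}}^{t_i} m(t,s) ds < ∞, and w ∈ L^∞(I,X). For x ∈ Ω_r define (Q₂x)(t) = ∫_{t_i}^{t} T(t−s)(f(s,x(s),(Hx)(s))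 + w(s)) ds for t ∈ (t_i, t_{i+1}] (with t_0 = 0 on [0,t₁]). Then the family {Q₂x : x ∈ Ω_r} is equicontinuous on each interval (t_i, t_{i+1}]: for all ε > 0 and every i there exists δ > 0 such that for all x ∈ Ω_r and all r₁, r₂ ∈ (t_i, t_{i+1}] with |r₂ − r₁| < δ one has ‖(Q₂x)(r₂) − (Q₂x)(r₁)‖ < ε. -/
open MeasureTheory

/-!
The forcing term `s ↦ f(s, x(s), (Hx)(s)) + w(s)` is measurable and bounded by a constant
independent of `x ∈ Ω_r`, so it suffices that `t ↦ ∫_a^t T(t - s) φ(s) ds` is equicontinuous on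
`[a, c]` uniformly over measurable `φ` with a common bound. For `u ≤ v` the difference of its
values is `∫_u^v T(v - s) φ(s) ds + ∫_a^u (T(v - s) - T(u - s)) φ(s) ds`. The first integral,
and the part of the second over `[u - η, u]`, are small because the integrands are bounded and
the intervals short; on `[a, u - η]` both arguments of `T` lie in `[η, c - a]`, where `T` is
uniformly continuous.
-/

open Set

theorem ContinuousOn.comp_aestronglyMeasurable_of_retraction {α β γ : Type*}
    [MeasurableSpace α] [TopologicalSpace β] [TopologicalSpace γ] {μ : Measure α}
    {g : β → γ} {s : Set β} (hg : ContinuousOn g s) {ρ : β → β} (hρ : Continuous ρ)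
    (hρs : ∀ y, ρ y ∈ s) (hρ_eq : ∀ y ∈ s, ρ y = y) {f : α → β}
    (hf : AEStronglyMeasurable f μ) (hfs : ∀ᵐ a ∂μ, f a ∈ s) :
    AEStronglyMeasurable (fun a => g (f a)) μ :=
  ((hg.comp_continuous hρ hρs).comp_aestronglyMeasurable hf).congr <| by
    filter_upwards [hfs] with a ha
    simp [hρ_eq _ ha]

theorem aestronglyMeasurable_of_continuousOn_Ioc {X : Type*} [TopologicalSpace X]
    [TopologicalSpace.PseudoMetrizableSpace X] {x : ℝ → X} (tt : ℕ → ℝ) (N : ℕ)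
    (hx : ∀ i < N, ContinuousOn x (Ioc (tt i) (tt (i + 1)))) :
    AEStronglyMeasurable x (volume.restrict (Ioc (tt 0) (tt N))) := by
  have hcover : Ioc (tt 0) (tt N) ⊆ ⋃ i : Fin N, Ioc (tt i) (tt (i + 1)) := fun y hy => by
    obtain ⟨i, hi, hyi⟩ := mem_iUnion₂.1 (Ioc_subset_biUnion_Ioc N tt hy)
    exact mem_iUnion.2 ⟨⟨i, Finset.mem_range.1 hi⟩, hyi⟩
  refine AEStronglyMeasurable.mono_measure ?_ (Measure.restrict_mono hcover le_rfl)
  exact .iUnion fun i => (hx i i.2).aestronglyMeasurable measurableSet_Ioc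

theorem aestronglyMeasurable_intervalIntegral_volterra {X Y : Type*} [NormedAddCommGroup X]
    [NormedAddCommGroup Y] [NormedSpace ℝ Y] {a b : ℝ} {g : ℝ → ℝ → X → Y}
    (hg : ContinuousOn (fun p : ℝ × ℝ × X => g p.1 p.2.1 p.2.2) (Icc a b ×ˢ Icc a b ×ˢ univ))
    {x : ℝ → X} (hx : AEStronglyMeasurable x (volume.restrict (Ioc a b))) :
    AEStronglyMeasurable (fun s => ∫ τ in a..s, g s τ (x τ)) (volume.restrict (Ioc a b)) := by
  rcases lt_or_ge b a with hba | hab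
  · simp [Ioc_eq_empty_of_le hba.le]
  set ν := volume.restrict (Ioc a b)
  let proj : ℝ → ℝ := fun t => projIcc a b hab t
  have hG : AEStronglyMeasurable (fun p : ℝ × ℝ => g p.1 p.2 (x p.2)) (ν.prod ν) := by
    refine hg.comp_aestronglyMeasurable_of_retraction
      (ρ := fun p => (proj p.1, proj p.2.1, p.2.2)) (by fun_prop)
      (fun p => ⟨(projIcc a b hab _).2, (projIcc a b hab _).2, mem_univ _⟩)
      (fun p hp => by simp [proj, projIcc_of_mem _ hp.1, projIcc_of_mem _ hp.2.1])
      (f := fun p : ℝ × ℝ => (p.1, p.2, x p.2)) ?_ ?_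
    · exact measurable_fst.aestronglyMeasurable.prodMk (measurable_snd.aestronglyMeasurable.prodMk
        (hx.comp_quasiMeasurePreserving Measure.quasiMeasurePreserving_snd))
    · rw [Measure.prod_restrict]
      filter_upwards [ae_restrict_mem (measurableSet_Ioc.prod measurableSet_Ioc)] with p hp
      exact ⟨Ioc_subset_Icc_self hp.1, Ioc_subset_Icc_self hp.2, mem_univ _⟩
  have hS : MeasurableSet {p : ℝ × ℝ | p.2 ∈ Ioc a p.1} :=
    (measurableSet_lt measurable_const measurable_snd).inter
      (measurableSet_le measurable_snd measurable_fst)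
  refine ((hG.indicator hS).integral_prod_right').congr ?_
  filter_upwards [ae_restrict_mem measurableSet_Ioc] with s hs
  change ∫ τ, (Ioc a s).indicator (fun τ => g s τ (x τ)) τ ∂ν = _
  rw [integral_indicator measurableSet_Ioc, Measure.restrict_restrict measurableSet_Ioc,
    inter_eq_self_of_subset_left (Ioc_subset_Ioc_right hs.2),
    intervalIntegral.integral_of_le hs.1.le]

theorem aestronglyMeasurable_comp_of_continuousOn_Icc {X Y Z : Type*} [TopologicalSpace X]
    [TopologicalSpace Y] [TopologicalSpace Z] {a b : ℝ} {f : ℝ → X → Y → Z}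
    (hf : ContinuousOn (fun p : ℝ × X × Y => f p.1 p.2.1 p.2.2) (Icc a b ×ˢ univ ×ˢ univ))
    {x : ℝ → X} {y : ℝ → Y} (hx : AEStronglyMeasurable x (volume.restrict (Ioc a b)))
    (hy : AEStronglyMeasurable y (volume.restrict (Ioc a b))) :
    AEStronglyMeasurable (fun s => f s (x s) (y s)) (volume.restrict (Ioc a b)) := by
  rcases lt_or_ge b a with hba | hab
  · simp [Ioc_eq_empty_of_le hba.le]
  refine hf.comp_aestronglyMeasurable_of_retraction
    (ρ := fun p => ((projIcc a b hab p.1 : ℝ), p.2)) (by fun_prop)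
    (fun p => ⟨(projIcc a b hab _).2, mem_univ _, mem_univ _⟩)
    (fun p hp => by simp [projIcc_of_mem _ hp.1])
    (f := fun s => (s, x s, y s)) (measurable_id.aestronglyMeasurable.prodMk (hx.prodMk hy)) ?_
  filter_upwards [ae_restrict_mem measurableSet_Ioc] with s hs
  exact ⟨Ioc_subset_Icc_self hs, mem_univ _, mem_univ _⟩

theorem intervalIntegral.norm_integral_le_mul_sub {E : Type*} [NormedAddCommGroup E]
    [NormedSpace ℝ E] {f : ℝ → E} {a b C : ℝ} (hab : a ≤ b) (h : ∀ x ∈ Ioc a b, ‖f x‖ ≤ C) :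
    ‖∫ x in a..b, f x‖ ≤ C * (b - a) := by
  have := intervalIntegral.norm_integral_le_of_norm_le_const (by rwa [uIoc_of_le hab])
  rwa [abs_of_nonneg (sub_nonneg.2 hab)] at this

section Convolution

variable {E G : Type*} [NormedAddCommGroup E] [NormedSpace ℝ E] [NormedAddCommGroup G]
  [NormedSpace ℝ G] {T : ℝ → E →L[ℝ] G} {φ : ℝ → E} {a c M B : ℝ}

theorem norm_apply_comp_sub_le (hT : ∀ t ∈ Icc 0 (c - a), ‖T t‖ ≤ M)
    (hφB : ∀ s ∈ Ioc a c, ‖φ s‖ ≤ B) {s t : ℝ} (has : a < s) (hst : s ≤ t) (htc : t ≤ c) :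
    ‖T (t - s) (φ s)‖ ≤ M * B :=
  (T _).le_of_opNorm_le_of_le (hT _ ⟨by linarith, by linarith⟩) (hφB s ⟨has, hst.trans htc⟩)

theorem intervalIntegrable_apply_comp_sub (hTc : ContinuousOn T (Ioc 0 (c - a)))
    (hT : ∀ t ∈ Icc 0 (c - a), ‖T t‖ ≤ M)
    (hφ : AEStronglyMeasurable φ (volume.restrict (Ioc a c))) (hφB : ∀ s ∈ Ioc a c, ‖φ s‖ ≤ B)
    {s₀ u t : ℝ} (has₀ : a ≤ s₀) (hs₀u : s₀ ≤ u) (hut : u ≤ t) (htc : t ≤ c) :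
    IntervalIntegrable (fun s => T (t - s) (φ s)) volume s₀ u := by
  rw [intervalIntegrable_iff_integrableOn_Ioc_of_le hs₀u]
  have hsub : Ioc s₀ u ⊆ Ioc a c := Ioc_subset_Ioc has₀ (hut.trans htc)
  have hTm : AEStronglyMeasurable (fun s => T (t - s)) (volume.restrict (Ioc s₀ u)) := by
    have hcont : ContinuousOn (fun s => T (t - s)) (Ioo a t) :=
      hTc.comp (by fun_prop) fun s hs => ⟨by linarith [hs.2], by linarith [hs.1]⟩
    refine (hcont.aestronglyMeasurable (μ := volume) measurableSet_Ioo).mono_measure ?_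
    rw [Measure.restrict_congr_set Ioo_ae_eq_Ioc]
    exact Measure.restrict_mono (Ioc_subset_Ioc has₀ hut) le_rfl
  have hφm : AEStronglyMeasurable φ (volume.restrict (Ioc s₀ u)) :=
    hφ.mono_measure (Measure.restrict_mono hsub le_rfl)
  refine Integrable.mono' (g := fun _ => M * B) (integrableOn_const measure_Ioc_lt_top.ne)
    ((ContinuousLinearMap.id ℝ _).aestronglyMeasurable_comp₂ hTm hφm) ?_
  filter_upwards [ae_restrict_mem measurableSet_Ioc] with s hs
  exact norm_apply_comp_sub_le hT hφB (has₀.trans_lt hs.1) (hs.2.trans hut) htc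

theorem norm_integral_apply_comp_sub_sub_le (hTc : ContinuousOn T (Ioc 0 (c - a)))
    (hT : ∀ t ∈ Icc 0 (c - a), ‖T t‖ ≤ M)
    (hφ : AEStronglyMeasurable φ (volume.restrict (Ioc a c))) (hφB : ∀ s ∈ Ioc a c, ‖φ s‖ ≤ B)
    (hB : 0 ≤ B) {u v η εT : ℝ} (hau : a ≤ u) (huv : u ≤ v) (hvc : v ≤ c) (hη : 0 ≤ η)
    (hεT : 0 ≤ εT) (hTη : ∀ s ∈ Ioc a (u - η), ‖T (v - s) - T (u - s)‖ ≤ εT) :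
    ‖(∫ s in a..v, T (v - s) (φ s)) - ∫ s in a..u, T (u - s) (φ s)‖ ≤
      M * B * (v - u) + εT * B * (c - a) + 2 * (M * B) * η := by
  set D : ℝ → G := fun s => T (v - s) (φ s) - T (u - s) (φ s)
  set p := max a (u - η)
  have hap : a ≤ p := le_max_left _ _
  have hpu : p ≤ u := max_le hau (by linarith)
  have hIv := intervalIntegrable_apply_comp_sub hTc hT hφ hφB le_rfl hau huv hvc
  have hIu := intervalIntegrable_apply_comp_sub hTc hT hφ hφB le_rfl hau le_rfl (huv.trans hvc)
  have hIuv := intervalIntegrable_apply_comp_sub hTc hT hφ hφB hau huv le_rfl hvc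
  have hID : IntervalIntegrable D volume a u := hIv.sub hIu
  have hsplit : (∫ s in a..v, T (v - s) (φ s)) - ∫ s in a..u, T (u - s) (φ s) =
      (∫ s in u..v, T (v - s) (φ s)) + ((∫ s in a..p, D s) + ∫ s in p..u, D s) := by
    rw [intervalIntegral.integral_add_adjacent_intervals
        (hID.mono_set (uIcc_subset_uIcc_left (by rw [uIcc_of_le hau]; exact ⟨hap, hpu⟩)))
        (hID.mono_set (uIcc_subset_uIcc_right (by rw [uIcc_of_le hau]; exact ⟨hap, hpu⟩))),
      intervalIntegral.integral_sub hIv hIu,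
      ← intervalIntegral.integral_add_adjacent_intervals hIv hIuv]
    abel
  have hnear : ‖∫ s in u..v, T (v - s) (φ s)‖ ≤ M * B * (v - u) :=
    intervalIntegral.norm_integral_le_mul_sub huv fun s hs =>
      norm_apply_comp_sub_le hT hφB (hau.trans_lt hs.1) hs.2 hvc
  have hfar : ‖∫ s in a..p, D s‖ ≤ εT * B * (c - a) := by
    refine (intervalIntegral.norm_integral_le_mul_sub hap fun s hs => ?_).trans
      (mul_le_mul_of_nonneg_left (by linarith [hpu.trans huv]) (mul_nonneg hεT hB))
    have hsη : s ≤ u - η := (le_max_iff.1 hs.2).resolve_left hs.1.not_ge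
    exact (T (v - s) - T (u - s)).le_of_opNorm_le_of_le (hTη s ⟨hs.1, hsη⟩)
      (hφB s ⟨hs.1, by linarith⟩)
  have hmid : ‖∫ s in p..u, D s‖ ≤ 2 * (M * B) * η := by
    refine (intervalIntegral.norm_integral_le_mul_sub hpu fun s hs => ?_).trans
      (mul_le_mul_of_nonneg_left (by linarith [le_max_right a (u - η)]) ?_)
    · calc ‖D s‖ ≤ ‖T (v - s) (φ s)‖ + ‖T (u - s) (φ s)‖ := norm_sub_le _ _
        _ ≤ M * B + M * B := add_le_add
            (norm_apply_comp_sub_le hT hφB (hap.trans_lt hs.1) (hs.2.trans huv) hvc)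
            (norm_apply_comp_sub_le hT hφB (hap.trans_lt hs.1) hs.2 (huv.trans hvc))
        _ = 2 * (M * B) := by ring
    · have hM : 0 ≤ M := (norm_nonneg _).trans (hT 0 ⟨le_rfl, by linarith⟩)
      positivity
  rw [hsplit]
  calc _ ≤ ‖∫ s in u..v, T (v - s) (φ s)‖ + (‖∫ s in a..p, D s‖ + ‖∫ s in p..u, D s‖) :=
        (norm_add_le _ _).trans (by gcongr; exact norm_add_le _ _)
    _ ≤ _ := by linarith

theorem exists_pos_forall_norm_integral_apply_comp_sub_sub_lt
    (hTc : ContinuousOn T (Ioc 0 (c - a))) (hT : ∀ t ∈ Icc 0 (c - a), ‖T t‖ ≤ M) (B : ℝ)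
    {ε : ℝ} (hε : 0 < ε) :
    ∃ δ > 0, ∀ φ : ℝ → E, AEStronglyMeasurable φ (volume.restrict (Ioc a c)) →
      (∀ s ∈ Ioc a c, ‖φ s‖ ≤ B) → ∀ u ∈ Icc a c, ∀ v ∈ Icc a c, |v - u| < δ →
      ‖(∫ s in a..v, T (v - s) (φ s)) - ∫ s in a..u, T (u - s) (φ s)‖ < ε := by
  set B' := max B 0
  have hε3 : 0 < ε / 3 := by positivity
  obtain ⟨η, hη, hηε⟩ := exists_pos_mul_lt hε3 (2 * (M * B'))
  obtain ⟨εT, hεT, hεTε⟩ := exists_pos_mul_lt hε3 (B' * (c - a))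
  have hTc' : ContinuousOn T (Icc η (c - a)) := hTc.mono fun t ht => ⟨hη.trans_le ht.1, ht.2⟩
  obtain ⟨δ', hδ', hTδ'⟩ := Metric.uniformContinuousOn_iff.1
    (isCompact_Icc.uniformContinuousOn_of_continuous hTc') εT hεT
  obtain ⟨δ₀, hδ₀, hδ₀ε⟩ := exists_pos_mul_lt hε3 (M * B')
  refine ⟨min δ₀ δ', lt_min hδ₀ hδ', fun φ hφ hφB u hu v hv huv => ?_⟩
  wlog hle : u ≤ v generalizing u v
  · rw [norm_sub_rev]
    exact this v hv u hu (by rwa [abs_sub_comm]) (le_of_not_ge hle)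
  have hd : v - u < min δ₀ δ' := by rwa [abs_of_nonneg (sub_nonneg.2 hle)] at huv
  have hM : 0 ≤ M := (norm_nonneg _).trans (hT 0 ⟨le_rfl, by linarith [hu.1, hv.2]⟩)
  have hTη : ∀ s ∈ Ioc a (u - η), ‖T (v - s) - T (u - s)‖ ≤ εT := fun s hs => by
    rw [← dist_eq_norm]
    refine (hTδ' _ ⟨by linarith [hs.2], by linarith [hs.1, hv.2]⟩
      _ ⟨by linarith [hs.2], by linarith [hs.1, hu.2]⟩ ?_).le
    rw [Real.dist_eq, show v - s - (u - s) = v - u by ring, abs_of_nonneg (by linarith)]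
    exact hd.trans_le (min_le_right _ _)
  have hnear : M * B' * (v - u) < ε / 3 :=
    (mul_le_mul_of_nonneg_left (hd.le.trans (min_le_left _ _)) (by positivity)).trans_lt hδ₀ε
  calc _ ≤ M * B' * (v - u) + εT * B' * (c - a) + 2 * (M * B') * η :=
        norm_integral_apply_comp_sub_sub_le hTc hT hφ
          (fun s hs => (hφB s hs).trans (le_max_left _ _)) (le_max_right _ _)
          hu.1 hle hv.2 hη.le hεT.le hTη
    _ < ε := by linarith

end Convolution

theorem norm_intervalIntegral_volterra_le {X Y : Type*} [NormedAddCommGroup X]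
    [NormedAddCommGroup Y] [NormedSpace ℝ Y] {b r Cm : ℝ} {h : ℝ → ℝ → X → Y}
    {mker : ℝ → ℝ → ℝ} (hm_nonneg : ∀ t ∈ Icc 0 b, ∀ s ∈ Icc 0 b, 0 ≤ mker t s)
    (hm_bdd : ∀ t ∈ Icc 0 b, ∀ s ∈ Icc 0 b, mker t s ≤ Cm)
    (hh : ∀ t ∈ Icc 0 b, ∀ s ∈ Icc 0 b, ∀ z : X, ‖h t s z‖ ≤ mker t s * ‖z‖)
    {x : ℝ → X} (hxr : ∀ s ∈ Icc 0 b, ‖x s‖ ≤ r) {t : ℝ} (ht : t ∈ Icc 0 b) :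
    ‖∫ τ in (0:ℝ)..t, h t τ (x τ)‖ ≤ Cm * r * b := by
  have hCm : 0 ≤ Cm := (hm_nonneg t ht t ht).trans (hm_bdd t ht t ht)
  have hr : 0 ≤ r := (norm_nonneg _).trans (hxr t ht)
  have hbound : ∀ τ ∈ Ioc 0 t, ‖h t τ (x τ)‖ ≤ Cm * r := fun τ hτ => by
    have hτ' : τ ∈ Icc 0 b := ⟨hτ.1.le, hτ.2.trans ht.2⟩
    exact (hh t ht τ hτ' _).trans (mul_le_mul (hm_bdd t ht τ hτ') (hxr τ hτ') (norm_nonneg _) hCm)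
  calc _ ≤ Cm * r * (t - 0) := intervalIntegral.norm_integral_le_mul_sub ht.1 hbound
    _ ≤ Cm * r * b := by gcongr; linarith [ht.2]

theorem norm_apply_add_le_of_growth {X : Type*} [NormedAddCommGroup X] {t r K C₁ C₂ C₃ Cw : ℝ}
    {f : ℝ → X → X → X} {μ₁ μ₂ μ₃ : ℝ → ℝ} (hμ₁ : μ₁ t ≤ C₁) (hμ₂ : 0 ≤ μ₂ t ∧ μ₂ t ≤ C₂)
    (hμ₃ : 0 ≤ μ₃ t ∧ μ₃ t ≤ C₃) (hf : ∀ x y : X, ‖f t x y‖ ≤ μ₁ t + μ₂ t * ‖x‖ + μ₃ t * ‖y‖)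
    {x y z : X} (hx : ‖x‖ ≤ r) (hy : ‖y‖ ≤ K) (hz : ‖z‖ ≤ Cw) :
    ‖f t x y + z‖ ≤ C₁ + C₂ * r + C₃ * K + Cw := by
  have hC₂ : 0 ≤ C₂ := hμ₂.1.trans hμ₂.2
  have hC₃ : 0 ≤ C₃ := hμ₃.1.trans hμ₃.2
  calc ‖f t x y + z‖ ≤ ‖f t x y‖ + ‖z‖ := norm_add_le _ _
    _ ≤ (μ₁ t + μ₂ t * ‖x‖ + μ₃ t * ‖y‖) + Cw := add_le_add (hf x y) hz
    _ ≤ C₁ + C₂ * r + C₃ * K + Cw := add_le_add_left (add_le_add (add_le_add hμ₁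
        (mul_le_mul hμ₂.2 hx (norm_nonneg _) hC₂)) (mul_le_mul hμ₃.2 hy (norm_nonneg _) hC₃)) _

theorem Q2_equicontinuous_on_pieces_general
    {X : Type*} [NormedAddCommGroup X] [NormedSpace ℝ X]
    (b : ℝ) (m : ℕ)
    (tt : ℕ → ℝ) (ht0 : tt 0 = 0) (htb : tt (m + 1) = b)
    (ht_mono : ∀ i j : ℕ, i < j → j ≤ m + 1 → tt i < tt j)
    (r : ℝ) (M : ℝ)
    (T : ℝ → X →L[ℝ] X)
    (hT : ∀ t ∈ Set.Icc (0:ℝ) b, ‖T t‖ ≤ M)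
    (hT_normcont : ContinuousOn T (Set.Ioc (0:ℝ) b))
    -- the nonlinearity f with growth governed by μ₁, μ₂, μ₃ ∈ L^∞(I, ℝ≥0)
    (f : ℝ → X → X → X)
    (hf_cont : ContinuousOn (fun p : ℝ × X × X => f p.1 p.2.1 p.2.2)
      (Set.Icc (0:ℝ) b ×ˢ (Set.univ ×ˢ Set.univ)))
    (μ₁ μ₂ μ₃ : ℝ → ℝ) (C₁ C₂ C₃ : ℝ)
    (hμ₁ : ∀ t ∈ Set.Icc (0:ℝ) b, 0 ≤ μ₁ t ∧ μ₁ t ≤ C₁)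
    (hμ₂ : ∀ t ∈ Set.Icc (0:ℝ) b, 0 ≤ μ₂ t ∧ μ₂ t ≤ C₂)
    (hμ₃ : ∀ t ∈ Set.Icc (0:ℝ) b, 0 ≤ μ₃ t ∧ μ₃ t ≤ C₃)
    (hf_growth : ∀ t ∈ Set.Icc (0:ℝ) b, ∀ x y : X,
      ‖f t x y‖ ≤ μ₁ t + μ₂ t * ‖x‖ + μ₃ t * ‖y‖)
    -- the Volterra kernel h dominated by the bounded kernel m
    (h : ℝ → ℝ → X → X)
    (hh_cont : ContinuousOn (fun p : ℝ × ℝ × X => h p.1 p.2.1 p.2.2)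
      (Set.Icc (0:ℝ) b ×ˢ (Set.Icc (0:ℝ) b ×ˢ Set.univ)))
    (mker : ℝ → ℝ → ℝ) (Cm : ℝ)
    (hm_nonneg : ∀ t ∈ Set.Icc (0:ℝ) b, ∀ s ∈ Set.Icc (0:ℝ) b, 0 ≤ mker t s)
    (hm_bdd : ∀ t ∈ Set.Icc (0:ℝ) b, ∀ s ∈ Set.Icc (0:ℝ) b, mker t s ≤ Cm)
    (hh : ∀ t ∈ Set.Icc (0:ℝ) b, ∀ s ∈ Set.Icc (0:ℝ) b, ∀ z : X,
      ‖h t s z‖ ≤ mker t s * ‖z‖)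
    -- the inhomogeneity w ∈ L^∞(I, X)
    (w : ℝ → X) (Cw : ℝ) (hw : ∀ t ∈ Set.Icc (0:ℝ) b, ‖w t‖ ≤ Cw)
    (hw_meas : AEStronglyMeasurable w volume)
    -- the operator Q₂ on Ω_r
    (Q₂ : (ℝ → X) → ℝ → X)
    (hQ₂a : ∀ x : ℝ → X, IsPC b m tt x → (∀ s ∈ Set.Icc (0:ℝ) b, ‖x s‖ ≤ r) →
      ∀ t ∈ Set.Icc (0:ℝ) (tt 1),
      Q₂ x t = ∫ s in (0:ℝ)..t,
        T (t - s) (f s (x s) (∫ τ in (0:ℝ)..s, h s τ (x τ)) + w s))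
    (hQ₂b : ∀ x : ℝ → X, IsPC b m tt x → (∀ s ∈ Set.Icc (0:ℝ) b, ‖x s‖ ≤ r) →
      ∀ i, 1 ≤ i → i ≤ m → ∀ t ∈ Set.Ioc (tt i) (tt (i + 1)),
      Q₂ x t = ∫ s in tt i..t,
        T (t - s) (f s (x s) (∫ τ in (0:ℝ)..s, h s τ (x τ)) + w s)) :
    ∀ ε : ℝ, 0 < ε → ∀ i ≤ m, ∃ δ : ℝ, 0 < δ ∧
      ∀ x : ℝ → X, IsPC b m tt x → (∀ s ∈ Set.Icc (0:ℝ) b, ‖x s‖ ≤ r) →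
      ∀ r₁ ∈ Set.Ioc (tt i) (tt (i + 1)), ∀ r₂ ∈ Set.Ioc (tt i) (tt (i + 1)),
        |r₂ - r₁| < δ → ‖Q₂ x r₂ - Q₂ x r₁‖ < ε := by
  intro ε hε i hi
  have hmono : MonotoneOn tt (Iic (m + 1)) :=
    (show StrictMonoOn tt (Iic (m + 1)) from fun i _ j hj hij => ht_mono i j hij hj).monotoneOn
  have hti : 0 ≤ tt i := ht0 ▸ hmono (by simp) (show i ≤ m + 1 by omega) (Nat.zero_le i)
  have hti1 : tt (i + 1) ≤ b := htb ▸ hmono (show i + 1 ≤ m + 1 by omega) self_mem_Iic (by omega)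
  have hsub : Ioc (tt i) (tt (i + 1)) ⊆ Ioc 0 b := Ioc_subset_Ioc hti hti1
  set B := C₁ + C₂ * r + C₃ * (Cm * r * b) + Cw
  obtain ⟨δ, hδ, hδε⟩ := exists_pos_forall_norm_integral_apply_comp_sub_sub_lt
    (a := tt i) (c := tt (i + 1)) (hT_normcont.mono (Ioc_subset_Ioc_right (by linarith)))
    (fun t ht => hT t ⟨ht.1, by linarith [ht.2]⟩) B hε
  refine ⟨δ, hδ, fun x hxPC hxr r₁ hr₁ r₂ hr₂ hr => ?_⟩
  have hxm : AEStronglyMeasurable x (volume.restrict (Ioc 0 b)) := by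
    simpa only [ht0, htb] using
      aestronglyMeasurable_of_continuousOn_Ioc tt (m + 1) fun j hj => hxPC.2.1 j (by omega)
  have hFm := (aestronglyMeasurable_comp_of_continuousOn_Icc hf_cont hxm
    (aestronglyMeasurable_intervalIntegral_volterra hh_cont hxm)).add hw_meas.restrict
  have hQ : ∀ t ∈ Ioc (tt i) (tt (i + 1)), Q₂ x t = ∫ s in tt i..t,
      T (t - s) (f s (x s) (∫ τ in (0:ℝ)..s, h s τ (x τ)) + w s) := fun t ht => by
    rcases i.eq_zero_or_pos with rfl | hpos
    · rw [hQ₂a x hxPC hxr t ⟨(ht0 ▸ ht.1).le, ht.2⟩, ht0]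
    · exact hQ₂b x hxPC hxr i hpos hi t ht
  rw [hQ r₂ hr₂, hQ r₁ hr₁]
  refine hδε _ (hFm.mono_measure (Measure.restrict_mono hsub le_rfl)) (fun s hs => ?_)
    r₁ (Ioc_subset_Icc_self hr₁) r₂ (Ioc_subset_Icc_self hr₂) hr
  have hs' : s ∈ Icc 0 b := Ioc_subset_Icc_self (hsub hs)
  exact norm_apply_add_le_of_growth (hμ₁ s hs').2 (hμ₂ s hs') (hμ₃ s hs') (hf_growth s hs')
    (hxr s hs') (norm_intervalIntegral_volterra_le hm_nonneg hm_bdd hh hxr hs') (hw s hs')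

/-- Equicontinuity of the family `{Q₂x : x ∈ Ω_r}` on each interval `(tᵢ, tᵢ₊₁]`, where
`(Q₂x)(t) = ∫_{tᵢ}^t T(t-s)(f(s, x(s), (Hx)(s)) + w(s)) ds` and `t ↦ T(t)` is
norm-continuous on `(0, b]`. -/
theorem Q2_equicontinuous_on_pieces
    {X : Type*} [NormedAddCommGroup X] [NormedSpace ℝ X] [CompleteSpace X]
    (b : ℝ) (hb : 0 < b) (m : ℕ) (hm : 1 ≤ m)
    (tt : ℕ → ℝ) (ht0 : tt 0 = 0) (htb : tt (m + 1) = b)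
    (ht_mono : ∀ i j : ℕ, i < j → j ≤ m + 1 → tt i < tt j)
    (r : ℝ) (hr : 0 < r) (M : ℝ)
    (T : ℝ → X →L[ℝ] X)
    (hT : ∀ t ∈ Set.Icc (0:ℝ) b, ‖T t‖ ≤ M)
    (hT_normcont : ContinuousOn T (Set.Ioc (0:ℝ) b))
    -- the nonlinearity f with growth governed by μ₁, μ₂, μ₃ ∈ L^∞(I, ℝ≥0)
    (f : ℝ → X → X → X)
    (hf_cont : ContinuousOn (fun p : ℝ × X × X => f p.1 p.2.1 p.2.2)
      (Set.Icc (0:ℝ) b ×ˢ (Set.univ ×ˢ Set.univ)))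
    (μ₁ μ₂ μ₃ : ℝ → ℝ) (C₁ C₂ C₃ : ℝ)
    (hμ₁ : ∀ t ∈ Set.Icc (0:ℝ) b, 0 ≤ μ₁ t ∧ μ₁ t ≤ C₁)
    (hμ₂ : ∀ t ∈ Set.Icc (0:ℝ) b, 0 ≤ μ₂ t ∧ μ₂ t ≤ C₂)
    (hμ₃ : ∀ t ∈ Set.Icc (0:ℝ) b, 0 ≤ μ₃ t ∧ μ₃ t ≤ C₃)
    (hf_growth : ∀ t ∈ Set.Icc (0:ℝ) b, ∀ x y : X,
      ‖f t x y‖ ≤ μ₁ t + μ₂ t * ‖x‖ + μ₃ t * ‖y‖)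
    -- the Volterra kernel h dominated by the bounded kernel m
    (h : ℝ → ℝ → X → X)
    (hh_cont : ContinuousOn (fun p : ℝ × ℝ × X => h p.1 p.2.1 p.2.2)
      (Set.Icc (0:ℝ) b ×ˢ (Set.Icc (0:ℝ) b ×ˢ Set.univ)))
    (mker : ℝ → ℝ → ℝ) (Cm : ℝ)
    (hm_nonneg : ∀ t ∈ Set.Icc (0:ℝ) b, ∀ s ∈ Set.Icc (0:ℝ) b, 0 ≤ mker t s)
    (hm_bdd : ∀ t ∈ Set.Icc (0:ℝ) b, ∀ s ∈ Set.Icc (0:ℝ) b, mker t s ≤ Cm)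
    (hh : ∀ t ∈ Set.Icc (0:ℝ) b, ∀ s ∈ Set.Icc (0:ℝ) b, ∀ z : X,
      ‖h t s z‖ ≤ mker t s * ‖z‖)
    (hK : ∀ i, 1 ≤ i → i ≤ m + 1 → ∃ Ki : ℝ, ∀ t ∈ Set.Icc (0:ℝ) b,
      (∫ s in tt (i - 1)..tt i, mker t s) ≤ Ki)
    -- the inhomogeneity w ∈ L^∞(I, X)
    (w : ℝ → X) (Cw : ℝ) (hw : ∀ t ∈ Set.Icc (0:ℝ) b, ‖w t‖ ≤ Cw)
    (hw_meas : AEStronglyMeasurable w volume)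
    -- the operator Q₂ on Ω_r
    (Q₂ : (ℝ → X) → ℝ → X)
    (hQ₂a : ∀ x : ℝ → X, IsPC b m tt x → (∀ s ∈ Set.Icc (0:ℝ) b, ‖x s‖ ≤ r) →
      ∀ t ∈ Set.Icc (0:ℝ) (tt 1),
      Q₂ x t = ∫ s in (0:ℝ)..t,
        T (t - s) (f s (x s) (∫ τ in (0:ℝ)..s, h s τ (x τ)) + w s))
    (hQ₂b : ∀ x : ℝ → X, IsPC b m tt x → (∀ s ∈ Set.Icc (0:ℝ) b, ‖x s‖ ≤ r) →
      ∀ i, 1 ≤ i → i ≤ m → ∀ t ∈ Set.Ioc (tt i) (tt (i + 1)),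
      Q₂ x t = ∫ s in tt i..t,
        T (t - s) (f s (x s) (∫ τ in (0:ℝ)..s, h s τ (x τ)) + w s)) :
    ∀ ε : ℝ, 0 < ε → ∀ i ≤ m, ∃ δ : ℝ, 0 < δ ∧
      ∀ x : ℝ → X, IsPC b m tt x → (∀ s ∈ Set.Icc (0:ℝ) b, ‖x s‖ ≤ r) →
      ∀ r₁ ∈ Set.Ioc (tt i) (tt (i + 1)), ∀ r₂ ∈ Set.Ioc (tt i) (tt (i + 1)),
        |r₂ - r₁| < δ → ‖Q₂ x r₂ - Q₂ x r₁‖ < ε :=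
  Q2_equicontinuous_on_pieces_general b m tt ht0 htb ht_mono r M T hT hT_normcont f hf_cont μ₁ μ₂ μ₃
    C₁ C₂ C₃ hμ₁ hμ₂ hμ₃ hf_growth h hh_cont mker Cm hm_nonneg hm_bdd hh w Cw hw hw_meas Q₂ hQ₂a
    hQ₂b
end

section
/- Let X be a Banach space, I = [0,b], 0 = t₀ < t₁ < ⋯ < t_{m+1} = b, and (T(t))_{t∈I} a family of bounded operators with sup_{t∈I}‖T(t)‖ ≤ M, such that T(t) is a compact operator for each t > 0 and T(t+s) = T(t)T(s) for t, s, t+s ∈ I. Assume f : I × X × X → X satisfies ‖f(t,x,y)‖ ≤ μ₁(t) + μ₂(t)‖x‖ + μ₃(t)‖y‖ with μ_i ∈ L^∞(I,ℝ≥0), (Hx)(t) = ∫₀ᵗ h(t,s,x(s)) ds with ‖h(t,s,z)‖ ≤ m(t,s)‖z‖ and K_i* = sup_{t∈I} ∫_{t_{i−1}}^{t_i} m(t,s) ds < ∞, and w ∈ L^∞(I,X). For x ∈ Ω_r define (Q₂x)(t) = ∫_{t_i}^{t} T(t−s)(f(s,x(s),(Hx)(s)) + w(s)) ds for t ∈ (t_i,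 t_{i+1}] (with t_0 = 0 on [0,t₁]). Then for every fixed t ∈ (t_i, t_{i+1}], the set V(t) = {(Q₂x)(t) : x ∈ Ω_r} is relatively compact in X. -/
/-!
The semigroup property factors `T (t - s)` as `T δ ∘ T (t - s - δ)` for `s ≤ t - δ`, so the
integral of `T (t - s) g(s)` over `[a, t - δ]` is `(t - δ - a)` times an average of points of the
compact convex set `closure (T δ '' closedBall 0 (M C))`, where `C` bounds `g`. The remaining
integral over `[t - δ, t]` has norm at most `M C δ`. Hence for every `δ > 0` the set of values
`(Q₂ x)(t)` lies within `M C δ` of a compact set, so it is totally bounded, and its closure is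
compact in the Banach space `X`. A uniform bound `C` on `f(s, x(s), (Hx)(s)) + w(s)` over `Ω_r`
comes from the growth conditions on `f`, `h` and `w`.
-/

open MeasureTheory Metric Set Filter Topology
open scoped Pointwise

theorem Metric.totallyBounded_of_forall_subset_thickening {α : Type*} [PseudoMetricSpace α]
    {s : Set α} (h : ∀ ε > 0, ∃ K, TotallyBounded K ∧ s ⊆ thickening ε K) :
    TotallyBounded s := by
  refine totallyBounded_iff.2 fun ε hε => ?_
  obtain ⟨K, hK, hsK⟩ := h (ε / 2) (half_pos hε)
  obtain ⟨F, hF, hKF⟩ := totallyBounded_iff.1 hK (ε / 2) (half_pos hε)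
  refine ⟨F, hF, fun x hx => ?_⟩
  obtain ⟨k, hk, hxk⟩ := mem_thickening_iff.1 (hsK hx)
  obtain ⟨y, hy, hky⟩ := mem_iUnion₂.1 (hKF hk)
  exact mem_iUnion₂.2 ⟨y, hy, mem_ball.2 (by linarith [dist_triangle x k y, mem_ball.1 hky])⟩

section

variable {X : Type*} [NormedAddCommGroup X] [NormedSpace ℝ X]

theorem Convex.intervalIntegral_mem_smul [CompleteSpace X] {S : Set X} (hS : Convex ℝ S)
    (hSc : IsClosed S) (hS0 : (0 : X) ∈ S) {G : ℝ → X} {a c : ℝ} (hac : a ≤ c)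
    (hG : ∀ s ∈ Ioc a c, G s ∈ S) :
    ∫ s in a..c, G s ∈ (c - a) • S := by
  rcases hac.eq_or_lt with rfl | hac
  · simpa using smul_mem_smul_set (a := (0 : ℝ)) hS0
  by_cases hGi : IntegrableOn G (Ioc a c)
  · have hvol : volume (Ioc a c) = ENNReal.ofReal (c - a) := Real.volume_Ioc
    have havg : ⨍ s in Ioc a c, G s ∈ S :=
      hS.set_average_mem hSc (by simp [hvol, hac]) (by simp [hvol])
        ((ae_restrict_iff' measurableSet_Ioc).2 (Eventually.of_forall hG)) hGi
    have hint : ∫ s in a..c, G s = (c - a) • ⨍ s in Ioc a c, G s := by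
      rw [intervalIntegral.integral_of_le hac.le, setAverage_eq, measureReal_def, hvol,
        ENNReal.toReal_ofReal (sub_nonneg.2 hac.le), smul_inv_smul₀ (sub_pos.2 hac).ne']
    exact hint ▸ smul_mem_smul_set havg
  · rw [intervalIntegral.integral_undef
      (mt (intervalIntegrable_iff_integrableOn_Ioc_of_le hac.le).1 hGi)]
    simpa using smul_mem_smul_set (a := c - a) hS0

section Semigroup

variable {T : ℝ → X →L[ℝ] X} {L M C a t δ : ℝ} {g : ℝ → X}

theorem norm_integral_semigroup_tail_le (hT : ∀ u ∈ Icc 0 L, ‖T u‖ ≤ M) (hδ : 0 ≤ δ)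
    (hδt : δ ≤ t - a) (htL : t - a ≤ L) (hg : ∀ s ∈ Ioc a t, ‖g s‖ ≤ C) :
    ‖∫ s in t - δ..t, T (t - s) (g s)‖ ≤ M * C * δ := by
  have hbound : ∀ s ∈ uIoc (t - δ) t, ‖T (t - s) (g s)‖ ≤ M * C := by
    intro s hs
    rw [uIoc_of_le (by linarith)] at hs
    exact (T _).le_of_opNorm_le_of_le (hT _ ⟨by linarith [hs.2], by linarith [hs.1]⟩)
      (hg s ⟨by linarith [hs.1], hs.2⟩)
  simpa [abs_of_nonneg hδ] using intervalIntegral.norm_integral_le_of_norm_le_const hbound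

variable [CompleteSpace X]

theorem integral_semigroup_head_mem (hT : ∀ u ∈ Icc 0 L, ‖T u‖ ≤ M)
    (hT_semigroup : ∀ u s, 0 ≤ u → 0 ≤ s → u + s ≤ L → T (u + s) = (T u).comp (T s))
    (hMC : 0 ≤ M * C) (hδ : 0 ≤ δ) (hδt : δ ≤ t - a) (htL : t - a ≤ L)
    (hg : ∀ s ∈ Ioc a t, ‖g s‖ ≤ C) :
    ∫ s in a..t - δ, T (t - s) (g s) ∈ (t - δ - a) • closure (T δ '' closedBall 0 (M * C)) := by
  refine Convex.intervalIntegral_mem_smul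
    ((convex_closedBall 0 _).linear_image (T δ).toLinearMap).closure isClosed_closure
    (subset_closure ⟨0, mem_closedBall_self hMC, map_zero _⟩) (by linarith) fun s hs => ?_
  have hs' : t - δ - s ∈ Icc 0 L := ⟨by linarith [hs.2], by linarith [hs.1]⟩
  have hfactor : T (t - s) = (T δ).comp (T (t - δ - s)) := by
    rw [← hT_semigroup δ _ hδ hs'.1 (by linarith [hs.1])]
    ring_nf
  rw [hfactor]
  refine subset_closure ⟨_, ?_, rfl⟩
  rw [mem_closedBall_zero_iff]
  exact (T _).le_of_opNorm_le_of_le (hT _ hs') (hg s ⟨hs.1, by linarith [hs.2]⟩)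

theorem integral_semigroup_mem_cthickening (hT : ∀ u ∈ Icc 0 L, ‖T u‖ ≤ M)
    (hT_semigroup : ∀ u s, 0 ≤ u → 0 ≤ s → u + s ≤ L → T (u + s) = (T u).comp (T s))
    (hMC : 0 ≤ M * C) (hδ : 0 ≤ δ) (hδt : δ ≤ t - a) (htL : t - a ≤ L)
    (hg : ∀ s ∈ Ioc a t, ‖g s‖ ≤ C) :
    ∫ s in a..t, T (t - s) (g s) ∈
      cthickening (M * C * δ) ((t - δ - a) • closure (T δ '' closedBall 0 (M * C))) := by
  have hhead := integral_semigroup_head_mem hT hT_semigroup hMC hδ hδt htL hg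
  by_cases hint : IntervalIntegrable (fun s => T (t - s) (g s)) volume a t
  · have hmid : t - δ ∈ uIcc a t := mem_uIcc_of_le (by linarith) (by linarith)
    rw [← intervalIntegral.integral_add_adjacent_intervals
      (hint.mono_set (uIcc_subset_uIcc left_mem_uIcc hmid))
      (hint.mono_set (uIcc_subset_uIcc hmid right_mem_uIcc))]
    refine mem_cthickening_of_dist_le _ _ _ _ hhead ?_
    rw [dist_eq_norm, add_sub_cancel_left]
    exact norm_integral_semigroup_tail_le hT hδ hδt htL hg
  · rw [intervalIntegral.integral_undef hint]
    exact mem_cthickening_of_dist_le 0 0 _ _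
      (zero_mem_smul_set (subset_closure ⟨0, mem_closedBall_self hMC, map_zero _⟩))
      (by simpa using mul_nonneg hMC hδ)

theorem totallyBounded_image_integral_semigroup (hT : ∀ u ∈ Icc 0 L, ‖T u‖ ≤ M)
    (hT_cpt : ∀ u, 0 < u → u ≤ L → IsCompactOperator (T u))
    (hT_semigroup : ∀ u s, 0 ≤ u → 0 ≤ s → u + s ≤ L → T (u + s) = (T u).comp (T s))
    (hat : a < t) (htL : t - a ≤ L) :
    TotallyBounded ((fun g : ℝ → X => ∫ s in a..t, T (t - s) (g s)) ''
      {g | ∀ s ∈ Ioc a t, ‖g s‖ ≤ C}) := by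
  refine totallyBounded_of_forall_subset_thickening fun ε hε => ?_
  obtain ⟨δ, ⟨hMCδ, hδt⟩, hδ⟩ : ∃ δ, (M * C * δ < ε ∧ δ ≤ t - a) ∧ 0 < δ := by
    have hlim : Tendsto (fun δ => M * C * δ) (𝓝 0) (𝓝 0) := by
      simpa using (continuous_const_mul (M * C)).tendsto 0
    exact (((hlim.eventually (gt_mem_nhds hε)).and (ge_mem_nhds (sub_pos.2 hat))).filter_mono
      nhdsWithin_le_nhds |>.and (self_mem_nhdsWithin (s := Ioi 0))).exists
  have hK : IsCompact ((t - δ - a) • closure (T δ '' closedBall 0 (M * C))) :=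
    ((hT_cpt δ hδ (hδt.trans htL)).isCompact_closure_image_of_bounded isBounded_closedBall).smul _
  refine ⟨_, hK.totallyBounded, ?_⟩
  rintro _ ⟨g, hg, rfl⟩
  have hC : 0 ≤ C := (norm_nonneg _).trans (hg t ⟨hat, le_rfl⟩)
  have hM : 0 ≤ M := (norm_nonneg _).trans (hT 0 ⟨le_rfl, by linarith⟩)
  exact cthickening_subset_thickening' hε hMCδ _
    (integral_semigroup_mem_cthickening hT hT_semigroup (mul_nonneg hM hC) hδ.le hδt htL hg)

end Semigroup

theorem norm_volterra_le {h : ℝ → ℝ → X → X} {mker : ℝ → ℝ → ℝ} {x : ℝ → X} {b Cm r s : ℝ}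
    (hm_nonneg : ∀ t ∈ Icc (0:ℝ) b, ∀ s ∈ Icc (0:ℝ) b, 0 ≤ mker t s)
    (hm_bdd : ∀ t ∈ Icc (0:ℝ) b, ∀ s ∈ Icc (0:ℝ) b, mker t s ≤ Cm)
    (hh : ∀ t ∈ Icc (0:ℝ) b, ∀ s ∈ Icc (0:ℝ) b, ∀ z : X, ‖h t s z‖ ≤ mker t s * ‖z‖)
    (hx : ∀ s ∈ Icc (0:ℝ) b, ‖x s‖ ≤ r) (hs : s ∈ Icc 0 b) :
    ‖∫ τ in (0:ℝ)..s, h s τ (x τ)‖ ≤ Cm * r * b := by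
  have hbound : ∀ τ ∈ uIoc 0 s, ‖h s τ (x τ)‖ ≤ Cm * r := by
    intro τ hτ
    rw [uIoc_of_le hs.1] at hτ
    have hτ' : τ ∈ Icc 0 b := ⟨hτ.1.le, hτ.2.trans hs.2⟩
    calc ‖h s τ (x τ)‖ ≤ mker s τ * ‖x τ‖ := hh s hs τ hτ' _
      _ ≤ Cm * r := mul_le_mul (hm_bdd s hs τ hτ') (hx τ hτ') (norm_nonneg _)
          ((hm_nonneg s hs τ hτ').trans (hm_bdd s hs τ hτ'))
  have hCmr : 0 ≤ Cm * r := mul_nonneg ((hm_nonneg s hs s hs).trans (hm_bdd s hs s hs))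
    ((norm_nonneg _).trans (hx s hs))
  calc ‖∫ τ in (0:ℝ)..s, h s τ (x τ)‖ ≤ Cm * r * |s - 0| :=
        intervalIntegral.norm_integral_le_of_norm_le_const hbound
    _ ≤ Cm * r * b := by
        rw [sub_zero, abs_of_nonneg hs.1]
        exact mul_le_mul_of_nonneg_left hs.2 hCmr

theorem norm_forcing_le {f : ℝ → X → X → X} {h : ℝ → ℝ → X → X} {w : ℝ → X}
    {μ₁ μ₂ μ₃ : ℝ → ℝ} {mker : ℝ → ℝ → ℝ} {x : ℝ → X} {b C₁ C₂ C₃ Cm Cw r s : ℝ}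
    (hμ₁ : ∀ t ∈ Icc (0:ℝ) b, 0 ≤ μ₁ t ∧ μ₁ t ≤ C₁)
    (hμ₂ : ∀ t ∈ Icc (0:ℝ) b, 0 ≤ μ₂ t ∧ μ₂ t ≤ C₂)
    (hμ₃ : ∀ t ∈ Icc (0:ℝ) b, 0 ≤ μ₃ t ∧ μ₃ t ≤ C₃)
    (hf_growth : ∀ t ∈ Icc (0:ℝ) b, ∀ x y : X, ‖f t x y‖ ≤ μ₁ t + μ₂ t * ‖x‖ + μ₃ t * ‖y‖)
    (hm_nonneg : ∀ t ∈ Icc (0:ℝ) b, ∀ s ∈ Icc (0:ℝ) b, 0 ≤ mker t s)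
    (hm_bdd : ∀ t ∈ Icc (0:ℝ) b, ∀ s ∈ Icc (0:ℝ) b, mker t s ≤ Cm)
    (hh : ∀ t ∈ Icc (0:ℝ) b, ∀ s ∈ Icc (0:ℝ) b, ∀ z : X, ‖h t s z‖ ≤ mker t s * ‖z‖)
    (hw : ∀ t ∈ Icc (0:ℝ) b, ‖w t‖ ≤ Cw)
    (hx : ∀ s ∈ Icc (0:ℝ) b, ‖x s‖ ≤ r) (hs : s ∈ Icc 0 b) :
    ‖f s (x s) (∫ τ in (0:ℝ)..s, h s τ (x τ)) + w s‖ ≤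
      C₁ + C₂ * r + C₃ * (Cm * r * b) + Cw := by
  have hHx := norm_volterra_le hm_nonneg hm_bdd hh hx hs
  have hC₂ : 0 ≤ C₂ := (hμ₂ s hs).1.trans (hμ₂ s hs).2
  have hC₃ : 0 ≤ C₃ := (hμ₃ s hs).1.trans (hμ₃ s hs).2
  calc _ ≤ ‖f s (x s) (∫ τ in (0:ℝ)..s, h s τ (x τ))‖ + ‖w s‖ := norm_add_le _ _
    _ ≤ μ₁ s + μ₂ s * ‖x s‖ + μ₃ s * ‖∫ τ in (0:ℝ)..s, h s τ (x τ)‖ + Cw :=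
        add_le_add (hf_growth s hs _ _) (hw s hs)
    _ ≤ C₁ + C₂ * r + C₃ * (Cm * r * b) + Cw := by
        gcongr
        exacts [(hμ₁ s hs).2, (hμ₂ s hs).2, hx s hs, (hμ₃ s hs).2]

theorem partition_le {m : ℕ} {tt : ℕ → ℝ} (ht_mono : ∀ i j : ℕ, i < j → j ≤ m + 1 → tt i < tt j)
    {i j : ℕ} (hij : i ≤ j) (hj : j ≤ m + 1) : tt i ≤ tt j := by
  rcases hij.eq_or_lt with rfl | hij
  exacts [le_rfl, (ht_mono i j hij hj).le]

end

theorem Q2_pointwise_relatively_compact_general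
    {X : Type*} [NormedAddCommGroup X] [NormedSpace ℝ X] [CompleteSpace X]
    (b : ℝ) (m : ℕ)
    (tt : ℕ → ℝ) (ht0 : tt 0 = 0) (htb : tt (m + 1) = b)
    (ht_mono : ∀ i j : ℕ, i < j → j ≤ m + 1 → tt i < tt j)
    (r : ℝ) (M : ℝ)
    (T : ℝ → X →L[ℝ] X)
    (hT : ∀ t ∈ Set.Icc (0:ℝ) b, ‖T t‖ ≤ M)
    (hT_cpt : ∀ t : ℝ, 0 < t → t ≤ b → IsCompactOperator (T t))
    (hT_semigroup : ∀ t s : ℝ, 0 ≤ t → 0 ≤ s → t + s ≤ b →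
      T (t + s) = (T t).comp (T s))
    -- the nonlinearity f with growth governed by μ₁, μ₂, μ₃ ∈ L^∞(I, ℝ≥0)
    (f : ℝ → X → X → X)
    (μ₁ μ₂ μ₃ : ℝ → ℝ) (C₁ C₂ C₃ : ℝ)
    (hμ₁ : ∀ t ∈ Set.Icc (0:ℝ) b, 0 ≤ μ₁ t ∧ μ₁ t ≤ C₁)
    (hμ₂ : ∀ t ∈ Set.Icc (0:ℝ) b, 0 ≤ μ₂ t ∧ μ₂ t ≤ C₂)
    (hμ₃ : ∀ t ∈ Set.Icc (0:ℝ) b, 0 ≤ μ₃ t ∧ μ₃ t ≤ C₃)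
    (hf_growth : ∀ t ∈ Set.Icc (0:ℝ) b, ∀ x y : X,
      ‖f t x y‖ ≤ μ₁ t + μ₂ t * ‖x‖ + μ₃ t * ‖y‖)
    -- the Volterra kernel h dominated by the bounded kernel m
    (h : ℝ → ℝ → X → X)
    (mker : ℝ → ℝ → ℝ) (Cm : ℝ)
    (hm_nonneg : ∀ t ∈ Set.Icc (0:ℝ) b, ∀ s ∈ Set.Icc (0:ℝ) b, 0 ≤ mker t s)
    (hm_bdd : ∀ t ∈ Set.Icc (0:ℝ) b, ∀ s ∈ Set.Icc (0:ℝ) b, mker t s ≤ Cm)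
    (hh : ∀ t ∈ Set.Icc (0:ℝ) b, ∀ s ∈ Set.Icc (0:ℝ) b, ∀ z : X,
      ‖h t s z‖ ≤ mker t s * ‖z‖)
    -- the inhomogeneity w ∈ L^∞(I, X)
    (w : ℝ → X) (Cw : ℝ) (hw : ∀ t ∈ Set.Icc (0:ℝ) b, ‖w t‖ ≤ Cw)
    -- the operator Q₂ on Ω_r
    (Q₂ : (ℝ → X) → ℝ → X)
    (hQ₂a : ∀ x : ℝ → X, IsPC b m tt x → (∀ s ∈ Set.Icc (0:ℝ) b, ‖x s‖ ≤ r) →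
      ∀ t ∈ Set.Icc (0:ℝ) (tt 1),
      Q₂ x t = ∫ s in (0:ℝ)..t,
        T (t - s) (f s (x s) (∫ τ in (0:ℝ)..s, h s τ (x τ)) + w s))
    (hQ₂b : ∀ x : ℝ → X, IsPC b m tt x → (∀ s ∈ Set.Icc (0:ℝ) b, ‖x s‖ ≤ r) →
      ∀ i, 1 ≤ i → i ≤ m → ∀ t ∈ Set.Ioc (tt i) (tt (i + 1)),
      Q₂ x t = ∫ s in tt i..t,
        T (t - s) (f s (x s) (∫ τ in (0:ℝ)..s, h s τ (x τ)) + w s)) :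
    ∀ i ≤ m, ∀ t ∈ Set.Ioc (tt i) (tt (i + 1)),
      IsCompact (closure
        {y : X | ∃ x : ℝ → X, IsPC b m tt x ∧ (∀ s ∈ Set.Icc (0:ℝ) b, ‖x s‖ ≤ r) ∧
          Q₂ x t = y}) := by
  intro i hi t ht
  have hti : 0 ≤ tt i := ht0 ▸ partition_le ht_mono i.zero_le (by omega)
  have htb' : t ≤ b := ht.2.trans (htb ▸ partition_le ht_mono (by omega) le_rfl)
  have hQ₂ : ∀ x, IsPC b m tt x → (∀ s ∈ Set.Icc (0:ℝ) b, ‖x s‖ ≤ r) →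
      Q₂ x t = ∫ s in tt i..t,
        T (t - s) (f s (x s) (∫ τ in (0:ℝ)..s, h s τ (x τ)) + w s) := by
    intro x hx hxr
    rcases i.eq_zero_or_pos with rfl | hi₀
    · rw [ht0] at ht ⊢
      exact hQ₂a x hx hxr t (Set.Ioc_subset_Icc_self ht)
    · exact hQ₂b x hx hxr i hi₀ hi t ht
  refine (TotallyBounded.closure ?_).isCompact_of_isClosed isClosed_closure
  refine (totallyBounded_image_integral_semigroup (C := C₁ + C₂ * r + C₃ * (Cm * r * b) + Cw)
    hT hT_cpt hT_semigroup ht.1 (by linarith)).subset ?_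
  rintro _ ⟨x, hx, hxr, rfl⟩
  exact ⟨_, fun s hs => norm_forcing_le hμ₁ hμ₂ hμ₃ hf_growth hm_nonneg hm_bdd hh hw hxr
    ⟨hti.trans hs.1.le, hs.2.trans htb'⟩, (hQ₂ x hx hxr).symm⟩

/-- If `T(t)` is a compact operator for every `t > 0` with the semigroup property
`T(t+s) = T(t) T(s)`, then for each fixed `t ∈ (tᵢ, tᵢ₊₁]` the set
`V(t) = {(Q₂x)(t) : x ∈ Ω_r}` is relatively compact in `X`, where
`(Q₂x)(t) = ∫_{tᵢ}^t T(t-s)(f(s, x(s), (Hx)(s)) + w(s)) ds`. -/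
theorem Q2_pointwise_relatively_compact
    {X : Type*} [NormedAddCommGroup X] [NormedSpace ℝ X] [CompleteSpace X]
    (b : ℝ) (hb : 0 < b) (m : ℕ) (hm : 1 ≤ m)
    (tt : ℕ → ℝ) (ht0 : tt 0 = 0) (htb : tt (m + 1) = b)
    (ht_mono : ∀ i j : ℕ, i < j → j ≤ m + 1 → tt i < tt j)
    (r : ℝ) (hr : 0 < r) (M : ℝ)
    (T : ℝ → X →L[ℝ] X)
    (hT : ∀ t ∈ Set.Icc (0:ℝ) b, ‖T t‖ ≤ M)
    (hT_cpt : ∀ t : ℝ, 0 < t → t ≤ b → IsCompactOperator (T t))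
    (hT_semigroup : ∀ t s : ℝ, 0 ≤ t → 0 ≤ s → t + s ≤ b →
      T (t + s) = (T t).comp (T s))
    -- the nonlinearity f with growth governed by μ₁, μ₂, μ₃ ∈ L^∞(I, ℝ≥0)
    (f : ℝ → X → X → X)
    (hf_cont : ContinuousOn (fun p : ℝ × X × X => f p.1 p.2.1 p.2.2)
      (Set.Icc (0:ℝ) b ×ˢ (Set.univ ×ˢ Set.univ)))
    (μ₁ μ₂ μ₃ : ℝ → ℝ) (C₁ C₂ C₃ : ℝ)
    (hμ₁ : ∀ t ∈ Set.Icc (0:ℝ) b, 0 ≤ μ₁ t ∧ μ₁ t ≤ C₁)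
    (hμ₂ : ∀ t ∈ Set.Icc (0:ℝ) b, 0 ≤ μ₂ t ∧ μ₂ t ≤ C₂)
    (hμ₃ : ∀ t ∈ Set.Icc (0:ℝ) b, 0 ≤ μ₃ t ∧ μ₃ t ≤ C₃)
    (hf_growth : ∀ t ∈ Set.Icc (0:ℝ) b, ∀ x y : X,
      ‖f t x y‖ ≤ μ₁ t + μ₂ t * ‖x‖ + μ₃ t * ‖y‖)
    -- the Volterra kernel h dominated by the bounded kernel m
    (h : ℝ → ℝ → X → X)
    (hh_cont : ContinuousOn (fun p : ℝ × ℝ × X => h p.1 p.2.1 p.2.2)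
      (Set.Icc (0:ℝ) b ×ˢ (Set.Icc (0:ℝ) b ×ˢ Set.univ)))
    (mker : ℝ → ℝ → ℝ) (Cm : ℝ)
    (hm_nonneg : ∀ t ∈ Set.Icc (0:ℝ) b, ∀ s ∈ Set.Icc (0:ℝ) b, 0 ≤ mker t s)
    (hm_bdd : ∀ t ∈ Set.Icc (0:ℝ) b, ∀ s ∈ Set.Icc (0:ℝ) b, mker t s ≤ Cm)
    (hh : ∀ t ∈ Set.Icc (0:ℝ) b, ∀ s ∈ Set.Icc (0:ℝ) b, ∀ z : X,
      ‖h t s z‖ ≤ mker t s * ‖z‖)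
    (hK : ∀ i, 1 ≤ i → i ≤ m + 1 → ∃ Ki : ℝ, ∀ t ∈ Set.Icc (0:ℝ) b,
      (∫ s in tt (i - 1)..tt i, mker t s) ≤ Ki)
    -- the inhomogeneity w ∈ L^∞(I, X)
    (w : ℝ → X) (Cw : ℝ) (hw : ∀ t ∈ Set.Icc (0:ℝ) b, ‖w t‖ ≤ Cw)
    (hw_meas : AEStronglyMeasurable w volume)
    -- the operator Q₂ on Ω_r
    (Q₂ : (ℝ → X) → ℝ → X)
    (hQ₂a : ∀ x : ℝ → X, IsPC b m tt x → (∀ s ∈ Set.Icc (0:ℝ) b, ‖x s‖ ≤ r) →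
      ∀ t ∈ Set.Icc (0:ℝ) (tt 1),
      Q₂ x t = ∫ s in (0:ℝ)..t,
        T (t - s) (f s (x s) (∫ τ in (0:ℝ)..s, h s τ (x τ)) + w s))
    (hQ₂b : ∀ x : ℝ → X, IsPC b m tt x → (∀ s ∈ Set.Icc (0:ℝ) b, ‖x s‖ ≤ r) →
      ∀ i, 1 ≤ i → i ≤ m → ∀ t ∈ Set.Ioc (tt i) (tt (i + 1)),
      Q₂ x t = ∫ s in tt i..t,
        T (t - s) (f s (x s) (∫ τ in (0:ℝ)..s, h s τ (x τ)) + w s)) :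
    ∀ i ≤ m, ∀ t ∈ Set.Ioc (tt i) (tt (i + 1)),
      IsCompact (closure
        {y : X | ∃ x : ℝ → X, IsPC b m tt x ∧ (∀ s ∈ Set.Icc (0:ℝ) b, ‖x s‖ ≤ r) ∧
          Q₂ x t = y}) :=
  Q2_pointwise_relatively_compact_general b m tt ht0 htb ht_mono r M T hT hT_cpt hT_semigroup f μ₁
    μ₂ μ₃ C₁ C₂ C₃ hμ₁ hμ₂ hμ₃ hf_growth h mker Cm hm_nonneg hm_bdd hh w Cw hw Q₂ hQ₂a hQ₂b
end

section
/- Let X and U be real Hilbert spaces, t₁ > 0, (S(t))_{t∈[0,t₁]}, (T(t))_{t∈[0,t₁]} strongly continuous families of bounded operators on X, B : U → X a bounded linear operator, λ > 0, x₀, x₁ ∈ X, g a map from functions on [0,t₁] to X, and f, H as follows: f : [0,t₁] × X × X → X with s ↦ f(s, x̄(s), (Hx̄)(s)) Bochner integrable, where (Hx̄)(t) = ∫₀ᵗ h(t,s,x̄(s)) ds. Set Ψ = ∫₀^{t₁} T(t₁−s) B B* T(t₁−s)* ds, p = x₁ − S(t₁)(x₀ − g(x̄)) − ∫₀^{t₁}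 T(t₁−s) f(s, x̄(s), (Hx̄)(s)) ds, and ū(s) = B* T(t₁−s)* (λI + Ψ)^{-1} p. If x̄ satisfies x̄(t) = S(t)(x₀ − g(x̄)) + ∫₀ᵗ T(t−s)[f(s, x̄(s), (Hx̄)(s)) + Bū(s)] ds for all t ∈ [0,t₁], then x₁ − x̄(t₁) = λ(λI + Ψ)^{-1} p. -/
/-!
At `t = t₁` the mild solution splits as `x̄(t₁) = x₁ - p + ∫ T(t₁-s) B ū(s) ds`, and by the
choice of `ū` the last integral is `Ψ (R p)`; the resolvent identity `λ R p + Ψ (R p) = p` then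
gives `x₁ - x̄(t₁) = λ R p`.

The analytic content is the integrability needed for the split. By uniform boundedness, a
strongly continuous family on `[0, t₁]` is bounded, hence jointly continuous, so it maps
integrable functions to integrable ones. The adjoints `T(t₁-s)*` are only weakly continuous;
they are strongly measurable because projecting onto the finite-dimensional spans of the values
at a countable dense set of times gives continuous approximants.
-/

open MeasureTheory Filter Set Topology
open scoped InnerProductSpace

section WeakMeasurability

variable {α 𝕜 E : Type*} [TopologicalSpace α] [SecondCountableTopology α] [MeasurableSpace α]
  [OpensMeasurableSpace α] [RCLike 𝕜] [NormedAddCommGroup E] [InnerProductSpace 𝕜 E]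
  [CompleteSpace E]

theorem stronglyMeasurable_of_continuous_inner {v : α → E}
    (hv : ∀ u, Continuous fun a => ⟪v a, u⟫_𝕜) : StronglyMeasurable v := by
  obtain ⟨D, hD, hD_dense⟩ := TopologicalSpace.exists_countable_dense α
  have : Countable D := hD.to_subtype
  let V : Finset D → Submodule 𝕜 E := fun F => Submodule.span 𝕜 ((fun d : D => v d) '' F)
  have hV_mono : Monotone V := fun F G hFG =>
    Submodule.span_mono (image_mono (Finset.coe_subset.2 hFG))
  have hV_fin (F : Finset D) : FiniteDimensional 𝕜 (V F) :=
    FiniteDimensional.span_of_finite 𝕜 (F.finite_toSet.image _)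
  have hv_mem (a : α) : v a ∈ (⨆ F, V F).topologicalClosure := by
    rw [← Submodule.orthogonal_orthogonal_eq_closure]
    refine (Submodule.mem_orthogonal' _ _).2 fun u hu =>
      congrFun (?_ : (fun a => ⟪v a, u⟫_𝕜) = fun _ => 0) a
    refine (hv u).ext_on hD_dense continuous_const fun d hd => ?_
    refine (Submodule.mem_orthogonal _ u).1 hu _ (Submodule.mem_iSup_of_mem {⟨d, hd⟩} ?_)
    exact Submodule.subset_span ⟨⟨d, hd⟩, by simp, rfl⟩
  have hproj_cont (F : Finset D) : Continuous fun a => (V F).starProjection (v a) := by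
    let b := stdOrthonormalBasis 𝕜 (V F)
    simp only [b.starProjection_eq_sum_rankOne, sum_apply,
      InnerProductSpace.rankOne_apply]
    refine continuous_finsetSum _ fun i _ => Continuous.smul ?_ continuous_const
    simpa only [Function.comp_def, inner_conj_symm] using RCLike.continuous_conj.comp (hv (b i))
  refine stronglyMeasurable_of_tendsto atTop (fun F => (hproj_cont F).stronglyMeasurable)
    (tendsto_pi_nhds.2 fun a => ?_)
  simpa [Submodule.starProjection_eq_self_iff.2 (hv_mem a)] using
    Submodule.starProjection_tendsto_closure_iSup V hV_mono (v a)

end WeakMeasurability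

section OperatorFamily

variable {α 𝕜 E F : Type*} [NontriviallyNormedField 𝕜] [NormedAddCommGroup E] [NormedSpace 𝕜 E]
  [NormedAddCommGroup F] [NormedSpace 𝕜 F]

theorem continuous_uncurry_of_norm_le [TopologicalSpace α] {K : α → E →L[𝕜] F} {M : ℝ}
    (hM : ∀ a, ‖K a‖ ≤ M) (hK : ∀ x, Continuous fun a => K a x) :
    Continuous fun q : α × E => K q.1 q.2 := by
  refine continuous_iff_continuousAt.2 fun ⟨a₀, x₀⟩ => ?_
  have hbound (q : α × E) :
      ‖K q.1 q.2 - K a₀ x₀‖ ≤ M * ‖q.2 - x₀‖ + ‖K q.1 x₀ - K a₀ x₀‖ :=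
    calc ‖K q.1 q.2 - K a₀ x₀‖ = ‖K q.1 (q.2 - x₀) + (K q.1 x₀ - K a₀ x₀)‖ := by
          rw [map_sub, sub_add_sub_cancel]
      _ ≤ ‖K q.1 (q.2 - x₀)‖ + ‖K q.1 x₀ - K a₀ x₀‖ := norm_add_le _ _
      _ ≤ M * ‖q.2 - x₀‖ + ‖K q.1 x₀ - K a₀ x₀‖ := by
          gcongr; exact (K q.1).le_of_opNorm_le (hM _) _
  have hlim : Tendsto (fun q : α × E => M * ‖q.2 - x₀‖ + ‖K q.1 x₀ - K a₀ x₀‖)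
      (𝓝 (a₀, x₀)) (𝓝 0) := by
    have : Continuous fun q : α × E => M * ‖q.2 - x₀‖ + ‖K q.1 x₀ - K a₀ x₀‖ := by
      have := hK x₀
      fun_prop
    simpa using this.tendsto (a₀, x₀)
  exact tendsto_iff_norm_sub_tendsto_zero.2 (squeeze_zero (fun _ => norm_nonneg _) hbound hlim)

theorem MeasureTheory.Integrable.apply_of_norm_le {μ : Measure ℝ} {K : ℝ → E →L[𝕜] F} {M : ℝ}
    (hM : ∀ r, ‖K r‖ ≤ M) (hK : ∀ x, Continuous fun r => K r x) {y : ℝ → E}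
    (hy : Integrable y μ) : Integrable (fun r => K r (y r)) μ :=
  (hy.norm.const_mul M).mono'
    ((continuous_uncurry_of_norm_le hM hK).comp_aestronglyMeasurable
      (aestronglyMeasurable_id.prodMk hy.1))
    (Eventually.of_forall fun r => (K r).le_of_opNorm_le (hM r) _)

theorem exists_bounded_extension_of_continuousOn_Icc [CompleteSpace E] {T : ℝ → E →L[𝕜] F}
    {a b : ℝ} (hab : a ≤ b) (hT : ∀ x, ContinuousOn (fun r => T r x) (Icc a b)) :
    ∃ K : ℝ → E →L[𝕜] F, (∀ x, Continuous fun r => K r x) ∧ (∃ M, ∀ r, ‖K r‖ ≤ M) ∧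
      EqOn K T (Icc a b) := by
  refine ⟨fun r => T (projIcc a b hab r), fun x => (hT x).comp_continuous
    (continuous_subtype_val.comp continuous_projIcc) fun r => (projIcc a b hab r).2, ?_,
    fun r hr => by simp only [projIcc_of_mem hab hr]⟩
  refine banach_steinhaus fun x => ?_
  obtain ⟨C, hC⟩ := isCompact_Icc.exists_bound_of_continuousOn (hT x)
  exact ⟨C, fun r => hC _ (projIcc a b hab r).2⟩

theorem intervalIntegrable_apply_sub_of_continuousOn [CompleteSpace E] {T : ℝ → E →L[𝕜] F}
    {t₁ : ℝ} (ht₁ : 0 ≤ t₁) (hT : ∀ x, ContinuousOn (fun r => T r x) (Icc 0 t₁)) {y : ℝ → E}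
    (hy : IntervalIntegrable y volume 0 t₁) :
    IntervalIntegrable (fun s => T (t₁ - s) (y s)) volume 0 t₁ := by
  obtain ⟨K, hK, ⟨M, hM⟩, hKT⟩ := exists_bounded_extension_of_continuousOn_Icc ht₁ hT
  have hK_sub (x : E) : Continuous fun s => K (t₁ - s) x := (hK x).comp (continuous_sub_left t₁)
  have hKy : IntervalIntegrable (fun s => K (t₁ - s) (y s)) volume 0 t₁ :=
    ⟨hy.1.apply_of_norm_le (fun _ => hM _) hK_sub, hy.2.apply_of_norm_le (fun _ => hM _) hK_sub⟩
  refine hKy.congr fun s hs => ?_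
  rw [uIoc_of_le ht₁] at hs
  simp only [hKT ⟨sub_nonneg.2 hs.2, sub_le_self t₁ hs.1.le⟩]

end OperatorFamily

section Adjoint

variable {𝕜 E F : Type*} [RCLike 𝕜] [NormedAddCommGroup E] [InnerProductSpace 𝕜 E]
  [CompleteSpace E] [NormedAddCommGroup F] [InnerProductSpace 𝕜 F] [CompleteSpace F]

theorem intervalIntegrable_adjoint_apply_sub_of_continuousOn {T : ℝ → E →L[𝕜] F} {t₁ : ℝ}
    (ht₁ : 0 ≤ t₁) (hT : ∀ x, ContinuousOn (fun r => T r x) (Icc 0 t₁)) (z : F) :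
    IntervalIntegrable (fun s => (T (t₁ - s)).adjoint z) volume 0 t₁ := by
  obtain ⟨K, hK, ⟨M, hM⟩, hKT⟩ := exists_bounded_extension_of_continuousOn_Icc ht₁ hT
  have hmeas : StronglyMeasurable fun r => (K r).adjoint z :=
    stronglyMeasurable_of_continuous_inner (𝕜 := 𝕜) fun u => by
      simpa only [ContinuousLinearMap.adjoint_inner_left] using continuous_const.inner (hK u)
  have hbound (r : ℝ) : ‖(K r).adjoint z‖ ≤ M * ‖z‖ :=
    (K r).adjoint.le_of_opNorm_le (by rw [LinearIsometryEquiv.norm_map]; exact hM r) z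
  have hKz : IntervalIntegrable (fun s => (K (t₁ - s)).adjoint z) volume 0 t₁ :=
    intervalIntegrable_const.mono_fun'
      (hmeas.comp_measurable (measurable_const_sub t₁)).aestronglyMeasurable
      (Eventually.of_forall fun s => hbound (t₁ - s))
  refine hKz.congr fun s hs => ?_
  rw [uIoc_of_le ht₁] at hs
  simp only [hKT ⟨sub_nonneg.2 hs.2, sub_le_self t₁ hs.1.le⟩]

end Adjoint

theorem terminal_error_identity_general
    {X U : Type*}
    [NormedAddCommGroup X] [InnerProductSpace ℝ X] [CompleteSpace X]
    [NormedAddCommGroup U] [InnerProductSpace ℝ U] [CompleteSpace U]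
    (t₁ : ℝ) (ht₁ : 0 < t₁)
    (S T : ℝ → X →L[ℝ] X)
    (hT_cont : ∀ z : X, ContinuousOn (fun t => T t z) (Set.Icc (0:ℝ) t₁))
    (B : U →L[ℝ] X)
    (l : ℝ) (x₀ x₁ : X)
    (g : (ℝ → X) → X)
    (f : ℝ → X → X → X) (h : ℝ → ℝ → X → X)
    (xbar : ℝ → X)
    (hf_int : IntervalIntegrable
      (fun s => f s (xbar s) (∫ σ in (0:ℝ)..s, h s σ (xbar σ))) volume 0 t₁)
    -- the controllability Gramian Ψ and its resolvent R = (λI + Ψ)⁻¹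
    (Ψ : X →L[ℝ] X)
    (hΨ : ∀ z : X, Ψ z = ∫ s in (0:ℝ)..t₁,
      T (t₁ - s) (B ((ContinuousLinearMap.adjoint B)
        ((ContinuousLinearMap.adjoint (T (t₁ - s))) z))))
    (R : X →L[ℝ] X)
    (hR₁ : (l • ContinuousLinearMap.id ℝ X + Ψ).comp R = ContinuousLinearMap.id ℝ X)
    -- the data p, the feedback control ū, and the mild solution equation
    (p : X)
    (hp : p = x₁ - S t₁ (x₀ - g xbar)
      - ∫ s in (0:ℝ)..t₁, T (t₁ - s) (f s (xbar s) (∫ σ in (0:ℝ)..s, h s σ (xbar σ))))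
    (ubar : ℝ → U)
    (hu : ∀ s : ℝ, ubar s = (ContinuousLinearMap.adjoint B)
      ((ContinuousLinearMap.adjoint (T (t₁ - s))) (R p)))
    (hmild : ∀ t ∈ Set.Icc (0:ℝ) t₁,
      xbar t = S t (x₀ - g xbar) + ∫ s in (0:ℝ)..t,
        T (t - s) (f s (xbar s) (∫ σ in (0:ℝ)..s, h s σ (xbar σ)) + B (ubar s))) :
    x₁ - xbar t₁ = l • R p := by
  have hdrift := intervalIntegrable_apply_sub_of_continuousOn ht₁.le hT_cont hf_int
  have hcontrol : IntervalIntegrable (fun s => T (t₁ - s) (B (ubar s))) volume 0 t₁ := by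
    have hadj := intervalIntegrable_adjoint_apply_sub_of_continuousOn ht₁.le hT_cont (R p)
    simp only [hu]
    exact intervalIntegrable_apply_sub_of_continuousOn ht₁.le hT_cont
      ⟨(B ∘L B.adjoint).integrable_comp hadj.1, (B ∘L B.adjoint).integrable_comp hadj.2⟩
  have hgramian : Ψ (R p) = ∫ s in (0:ℝ)..t₁, T (t₁ - s) (B (ubar s)) := by
    simp only [hΨ, hu]
  have hresolvent : l • R p + Ψ (R p) = p := by
    simpa using congr($hR₁ p)
  have hterminal := hmild t₁ ⟨ht₁.le, le_rfl⟩
  simp only [map_add] at hterminal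
  rw [intervalIntegral.integral_add hdrift hcontrol, ← hgramian] at hterminal
  rw [hterminal, eq_sub_of_add_eq hresolvent, hp]
  abel

/-- Terminal-error identity for the mild solution with feedback control: if
`x̄(t) = S(t)(x₀ - g(x̄)) + ∫₀ᵗ T(t-s)[f(s, x̄(s), (Hx̄)(s)) + B ū(s)] ds` on `[0, t₁]`, where
`ū(s) = B* T(t₁-s)* (λI + Ψ)⁻¹ p`, `Ψ = ∫₀^{t₁} T(t₁-s) B B* T(t₁-s)* ds` and
`p = x₁ - S(t₁)(x₀ - g(x̄)) - ∫₀^{t₁} T(t₁-s) f(s, x̄(s), (Hx̄)(s)) ds`, then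
`x₁ - x̄(t₁) = λ (λI + Ψ)⁻¹ p`. -/
theorem terminal_error_identity
    {X U : Type*}
    [NormedAddCommGroup X] [InnerProductSpace ℝ X] [CompleteSpace X]
    [NormedAddCommGroup U] [InnerProductSpace ℝ U] [CompleteSpace U]
    (t₁ : ℝ) (ht₁ : 0 < t₁)
    (S T : ℝ → X →L[ℝ] X)
    (hS_cont : ∀ z : X, ContinuousOn (fun t => S t z) (Set.Icc (0:ℝ) t₁))
    (hT_cont : ∀ z : X, ContinuousOn (fun t => T t z) (Set.Icc (0:ℝ) t₁))
    (B : U →L[ℝ] X)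
    (l : ℝ) (hl : 0 < l) (x₀ x₁ : X)
    (g : (ℝ → X) → X)
    (f : ℝ → X → X → X) (h : ℝ → ℝ → X → X)
    (xbar : ℝ → X)
    (hf_int : IntervalIntegrable
      (fun s => f s (xbar s) (∫ σ in (0:ℝ)..s, h s σ (xbar σ))) volume 0 t₁)
    -- the controllability Gramian Ψ and its resolvent R = (λI + Ψ)⁻¹
    (Ψ : X →L[ℝ] X)
    (hΨ : ∀ z : X, Ψ z = ∫ s in (0:ℝ)..t₁,
      T (t₁ - s) (B ((ContinuousLinearMap.adjoint B)
        ((ContinuousLinearMap.adjoint (T (t₁ - s))) z))))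
    (R : X →L[ℝ] X)
    (hR₁ : (l • ContinuousLinearMap.id ℝ X + Ψ).comp R = ContinuousLinearMap.id ℝ X)
    (hR₂ : R.comp (l • ContinuousLinearMap.id ℝ X + Ψ) = ContinuousLinearMap.id ℝ X)
    -- the data p, the feedback control ū, and the mild solution equation
    (p : X)
    (hp : p = x₁ - S t₁ (x₀ - g xbar)
      - ∫ s in (0:ℝ)..t₁, T (t₁ - s) (f s (xbar s) (∫ σ in (0:ℝ)..s, h s σ (xbar σ))))
    (ubar : ℝ → U)
    (hu : ∀ s : ℝ, ubar s = (ContinuousLinearMap.adjoint B)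
      ((ContinuousLinearMap.adjoint (T (t₁ - s))) (R p)))
    (hmild : ∀ t ∈ Set.Icc (0:ℝ) t₁,
      xbar t = S t (x₀ - g xbar) + ∫ s in (0:ℝ)..t,
        T (t - s) (f s (xbar s) (∫ σ in (0:ℝ)..s, h s σ (xbar σ)) + B (ubar s))) :
    x₁ - xbar t₁ = l • R p :=
  terminal_error_identity_general t₁ ht₁ S T hT_cont B l x₀ x₁ g f h xbar hf_int Ψ hΨ R hR₁ p hp
    ubar hu hmild
end

section
/- Let X and U be real Hilbert spaces, a < c, (T(t))_{t∈[0,c−a]} a family of bounded linear operators on X with t ↦ T(t)z continuous for each z ∈ X and ‖T(t)‖ ≤ M, and B : U → X a bounded linear operator. Define the Gramian Ψ = ∫_a^c T(c−s) B B* T(c−s)* ds. Then the following are equivalent: (a) the reachable set {∫_a^c T(c−s) B u(s) ds : u ∈ L²([a,c], U)} is dense in X; (b) λ(λI + Ψ)^{-1} → 0 in the strong operator topology as λ → 0⁺, i.e. λ(λI+Ψ)^{-1}x → 0 in norm for every x ∈ X. -/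
/-!
Write `v_z(s) = B* T(c - s)* z`. Exchanging the inner product with the integral gives
`⟪x, Ψ z⟫ = ∫ ⟪v_x(s), v_z(s)⟫ ds`, so `Ψ` is a positive operator. The control `u = v_z` steers
to `Ψ z`, so the reachable set contains the range of `Ψ`; and if `Ψ z = 0` then `v_z = 0` a.e.,
so `z` is orthogonal to every reachable state. Hence the reachable set is dense iff `Ψ` is
injective, i.e. (`Ψ` being self-adjoint) iff `Ψ` has dense range.

Positivity gives `‖λ (λ + Ψ)⁻¹‖ ≤ 1`, and on the range of `Ψ`,
`λ (λ + Ψ)⁻¹ Ψ w = λ w - λ² (λ + Ψ)⁻¹ w → 0`; a uniformly bounded family converging on a dense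
set converges everywhere. Conversely `λ (λ + Ψ)⁻¹ z = z` for `z ∈ ker Ψ`.

The one technical point is that `s ↦ T(c - s)* z` is only weakly continuous. It is still strongly
measurable (a Pettis-type argument): it takes values in the closed span of countably many of its
values, and its projections onto an exhausting sequence of finite-dimensional subspaces of that
span are measurable.
-/

open MeasureTheory
open scoped Topology

section ControllabilityGramian

open Filter Set Submodule
open ContinuousLinearMap (adjoint)
open scoped InnerProductSpace

theorem aestronglyMeasurable_apply_of_continuous {α Y Z : Type*} [MeasurableSpace α]
    {μ : Measure α} [TopologicalSpace Y] [NormedAddCommGroup Z] {F : α → Y → Z}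
    (hF : ∀ y, AEStronglyMeasurable (fun t => F t y) μ) (hFc : ∀ t, Continuous (F t))
    {v : α → Y} (hv : AEStronglyMeasurable v μ) :
    AEStronglyMeasurable (fun t => F t (v t)) μ := by
  have hsimple (φ : SimpleFunc α Y) : AEStronglyMeasurable (fun t => F t (φ t)) μ := by
    have hsum : (fun t => F t (φ t))
        = ∑ y ∈ φ.range, (φ ⁻¹' {y}).indicator (fun t => F t y) := by
      ext t
      rw [Finset.sum_apply, Finset.sum_eq_single_of_mem (φ t) (φ.mem_range_self t)]
      · simp
      · intro y _ hy
        exact indicator_of_notMem (fun h => hy h.symm) _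
    rw [hsum]
    exact Finset.aestronglyMeasurable_sum _ fun y _ =>
      (hF y).indicator (φ.measurableSet_preimage _)
  obtain ⟨w, hw, hvw⟩ := hv
  refine (aestronglyMeasurable_of_tendsto_ae atTop (fun n => hsimple (hw.approx n))
    (ae_of_all _ fun t => ((hFc t).tendsto _).comp (hw.tendsto_approx t))).congr ?_
  filter_upwards [hvw] with t ht
  rw [ht]

variable {X : Type*} [NormedAddCommGroup X] [InnerProductSpace ℝ X]

section WeaklyContinuous

variable [CompleteSpace X]

theorem mem_topologicalClosure_span_image_of_continuousOn_inner {α : Type*}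
    [TopologicalSpace α] {g : α → X} {S D : Set α} (hDS : D ⊆ S) (hSD : S ⊆ closure D)
    (hg : ∀ x, ContinuousOn (fun t => ⟪x, g t⟫_ℝ) S) {t : α} (ht : t ∈ S) :
    g t ∈ (span ℝ (g '' D)).topologicalClosure := by
  rw [← orthogonal_orthogonal_eq_closure, mem_orthogonal']
  intro w hw
  have hD : EqOn (fun t => ⟪w, g t⟫_ℝ) 0 D := fun d hd =>
    inner_left_of_mem_orthogonal (subset_span (mem_image_of_mem g hd)) hw
  rw [real_inner_comm]
  exact hD.of_subset_closure (hg w) continuousOn_const hDS hSD ht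

theorem aestronglyMeasurable_of_inner_of_mem_topologicalClosure_span {α : Type*}
    [MeasurableSpace α] {μ : Measure α} {g : α → X} {C : Set X} (hC : C.Countable)
    (hinner : ∀ x, AEStronglyMeasurable (fun t => ⟪x, g t⟫_ℝ) μ)
    (hmem : ∀ᵐ t ∂μ, g t ∈ (span ℝ C).topologicalClosure) :
    AEStronglyMeasurable g μ := by
  obtain ⟨e, hCe⟩ := Set.countable_iff_exists_subset_range.mp hC
  let K : ℕ → Submodule ℝ X := fun n => span ℝ (e '' Iic n)
  have hK : Monotone K := fun m n hmn => span_mono (image_mono (Iic_subset_Iic.2 hmn))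
  have hCK : span ℝ C ≤ ⨆ n, K n := span_le.2 fun x hx => by
    obtain ⟨n, rfl⟩ := hCe hx
    exact mem_iSup_of_mem n (subset_span (mem_image_of_mem e self_mem_Iic))
  have (n : ℕ) : FiniteDimensional ℝ (K n) := .span_of_finite ℝ ((finite_Iic n).image e)
  have hproj : ∀ n, AEStronglyMeasurable (fun t => (K n).starProjection (g t)) μ := by
    intro n
    let b := stdOrthonormalBasis ℝ (K n)
    simp only [b.starProjection_eq_sum_rankOne, FunLike.coe_sum, Finset.sum_apply,
      InnerProductSpace.rankOne_apply]
    exact Finset.aestronglyMeasurable_fun_sum _ fun i _ => (hinner _).smul_const _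
  refine aestronglyMeasurable_of_tendsto_ae atTop hproj ?_
  filter_upwards [hmem] with t ht
  have := starProjection_tendsto_closure_iSup K hK (g t)
  rwa [starProjection_eq_self_iff.2 (topologicalClosure_mono hCK ht)] at this

theorem aestronglyMeasurable_of_continuousOn_inner {α : Type*} [TopologicalSpace α]
    [TopologicalSpace.PseudoMetrizableSpace α] [MeasurableSpace α] [OpensMeasurableSpace α]
    {μ : Measure α} {S : Set α} (hS : MeasurableSet S) (hsep : TopologicalSpace.IsSeparable S)
    {g : α → X} (hg : ∀ x, ContinuousOn (fun t => ⟪x, g t⟫_ℝ) S) :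
    AEStronglyMeasurable g (μ.restrict S) := by
  obtain ⟨D, hDS, hDc, hSD⟩ := hsep.exists_countable_dense_subset
  refine aestronglyMeasurable_of_inner_of_mem_topologicalClosure_span (hDc.image g)
    (fun x => (hg x).aestronglyMeasurable hS) ?_
  filter_upwards [ae_restrict_mem hS] with t ht
  exact mem_topologicalClosure_span_image_of_continuousOn_inner hDS hSD hg ht

end WeaklyContinuous

section Resolvent

theorem mul_norm_le_norm_of_smul_add_eq {Ψ : X → X} (hΨ : ∀ x, 0 ≤ ⟪Ψ x, x⟫_ℝ) {l : ℝ}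
    {x y : X} (h : l • x + Ψ x = y) : l * ‖x‖ ≤ ‖y‖ := by
  rcases (norm_nonneg x).eq_or_lt with hx | hx
  · rw [← hx, mul_zero]; exact norm_nonneg y
  refine le_of_mul_le_mul_right ?_ hx
  calc l * ‖x‖ * ‖x‖ ≤ ⟪l • x + Ψ x, x⟫_ℝ := by
        rw [inner_add_left, real_inner_smul_left, real_inner_self_eq_norm_mul_norm, mul_assoc]
        linarith [hΨ x]
    _ ≤ ‖y‖ * ‖x‖ := h ▸ real_inner_le_norm _ _

variable {Ψ : X →L[ℝ] X} {R : ℝ → X →L[ℝ] X}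

theorem tendsto_smul_resolvent_of_denseRange (hΨ : ∀ x, 0 ≤ ⟪Ψ x, x⟫_ℝ) (hdense : DenseRange Ψ)
    (hR : ∀ l > 0, ∀ y, l • R l y + Ψ (R l y) = y) (hR' : ∀ l > 0, ∀ x, R l (l • x + Ψ x) = x)
    (z : X) : Tendsto (fun l => l • R l z) (𝓝[>] 0) (𝓝 0) := by
  have hbound : ∀ l > 0, ∀ y, ‖l • R l y‖ ≤ ‖y‖ := fun l hl y => by
    rw [norm_smul, Real.norm_of_nonneg hl.le]
    exact mul_norm_le_norm_of_smul_add_eq hΨ (hR l hl y)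
  have hrange (w : X) : Tendsto (fun l => l • R l (Ψ w)) (𝓝[>] 0) (𝓝 0) := by
    have hle : ∀ l > 0, ‖l • R l (Ψ w)‖ ≤ 2 * l * ‖w‖ := fun l hl => by
      have h := hR' l hl w
      rw [map_add, map_smul] at h
      rw [eq_sub_of_add_eq' h, smul_sub]
      calc ‖l • w - l • (l • R l w)‖ ≤ ‖l • w‖ + ‖l • (l • R l w)‖ := norm_sub_le _ _
        _ ≤ l * ‖w‖ + l * ‖w‖ := by
          rw [norm_smul, norm_smul l (l • R l w), Real.norm_of_nonneg hl.le]
          gcongr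
          exact hbound l hl w
        _ = 2 * l * ‖w‖ := by ring
    have hlim : Tendsto (fun l : ℝ => 2 * l * ‖w‖) (𝓝[>] 0) (𝓝 0) := by
      have : Continuous fun l : ℝ => 2 * l * ‖w‖ := by fun_prop
      simpa using (this.tendsto 0).mono_left nhdsWithin_le_nhds
    exact squeeze_zero_norm' (eventually_nhdsWithin_of_forall hle) hlim
  refine Metric.tendsto_nhds.2 fun ε hε => ?_
  obtain ⟨w, hzw⟩ := hdense.exists_dist_lt z (half_pos hε)
  filter_upwards [Metric.tendsto_nhds.1 (hrange w) (ε / 2) (half_pos hε), self_mem_nhdsWithin]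
    with l hlw hl
  calc dist (l • R l z) 0 = ‖l • R l (z - Ψ w) + l • R l (Ψ w)‖ := by
        rw [dist_zero_right, ← smul_add, ← map_add, sub_add_cancel]
    _ ≤ ‖l • R l (z - Ψ w)‖ + ‖l • R l (Ψ w)‖ := norm_add_le _ _
    _ < ε / 2 + ε / 2 := by
        refine add_lt_add_of_le_of_lt ((hbound l hl _).trans ?_) (by simpa using hlw)
        rw [← dist_eq_norm]; exact hzw.le
    _ = ε := add_halves ε

theorem injective_of_tendsto_smul_resolvent (hR' : ∀ l > 0, ∀ x, R l (l • x + Ψ x) = x)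
    (h : ∀ z, Tendsto (fun l => l • R l z) (𝓝[>] 0) (𝓝 0)) : Function.Injective Ψ := by
  refine (injective_iff_map_eq_zero Ψ).2 fun z hz => ?_
  have hfix : ∀ l > 0, l • R l z = z := fun l hl => by
    simpa [hz] using hR' l hl z
  exact tendsto_nhds_unique (l := 𝓝[>] (0 : ℝ)) tendsto_const_nhds
    ((h z).congr' (eventually_nhdsWithin_of_forall hfix))

theorem IsSelfAdjoint.denseRange_of_injective [CompleteSpace X] (hΨ : IsSelfAdjoint Ψ)
    (hinj : Function.Injective Ψ) : DenseRange Ψ := by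
  have : Ψ.range.topologicalClosure = ⊤ := by
    rw [topologicalClosure_eq_top_iff, Ψ.orthogonal_range, hΨ.adjoint_eq]
    exact LinearMap.ker_eq_bot.2 hinj
  exact dense_iff_topologicalClosure_eq_top.2 this

theorem tendsto_smul_resolvent_iff_injective [CompleteSpace X] (hΨ : Ψ.IsPositive)
    (hR : ∀ l > 0, ∀ y, l • R l y + Ψ (R l y) = y) (hR' : ∀ l > 0, ∀ x, R l (l • x + Ψ x) = x) :
    (∀ z, Tendsto (fun l => l • R l z) (𝓝[>] 0) (𝓝 0)) ↔ Function.Injective Ψ :=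
  ⟨injective_of_tendsto_smul_resolvent hR', fun hinj =>
    tendsto_smul_resolvent_of_denseRange hΨ.inner_nonneg_left
      (hΨ.isSelfAdjoint.denseRange_of_injective hinj) hR hR'⟩

end Resolvent

section ControlSystem

variable {a c M : ℝ} {T : ℝ → X →L[ℝ] X}

theorem const_sub_mem_Icc {s : ℝ} (hs : s ∈ Icc a c) : c - s ∈ Icc 0 (c - a) :=
  ⟨sub_nonneg.2 hs.2, sub_le_sub_left hs.1 c⟩

theorem continuousOn_apply_const_sub
    (hT_cont : ∀ z : X, ContinuousOn (fun t => T t z) (Icc 0 (c - a))) (x : X) :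
    ContinuousOn (fun s => T (c - s) x) (Icc a c) :=
  (hT_cont x).comp (continuous_const.sub continuous_id).continuousOn fun _ => const_sub_mem_Icc

variable [CompleteSpace X] {U : Type*} [NormedAddCommGroup U] [InnerProductSpace ℝ U]
  [CompleteSpace U] {B : U →L[ℝ] X} {Ψ : X →L[ℝ] X}

noncomputable def adjointOutput (T : ℝ → X →L[ℝ] X) (B : U →L[ℝ] X) (c : ℝ) (z : X) (s : ℝ) : U :=
  adjoint B (adjoint (T (c - s)) z)

theorem aestronglyMeasurable_adjointOutput
    (hT_cont : ∀ z : X, ContinuousOn (fun t => T t z) (Icc 0 (c - a))) (z : X) :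
    AEStronglyMeasurable (adjointOutput T B c z) (volume.restrict (Icc a c)) := by
  refine (adjoint B).continuous.comp_aestronglyMeasurable
    (aestronglyMeasurable_of_continuousOn_inner measurableSet_Icc (.of_separableSpace (Icc a c)) ?_)
  intro x
  refine ((continuousOn_apply_const_sub hT_cont x).inner (continuousOn_const (c := z))).congr
    fun s _ => ?_
  exact ContinuousLinearMap.adjoint_inner_right _ x z

theorem norm_adjointOutput_le (hT_bdd : ∀ t ∈ Icc (0 : ℝ) (c - a), ‖T t‖ ≤ M) (z : X) {s : ℝ}
    (hs : s ∈ Icc a c) : ‖adjointOutput T B c z s‖ ≤ ‖B‖ * (M * ‖z‖) := by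
  calc ‖adjoint B (adjoint (T (c - s)) z)‖ ≤ ‖B‖ * ‖adjoint (T (c - s)) z‖ := by
        simpa using (adjoint B).le_opNorm (adjoint (T (c - s)) z)
    _ ≤ ‖B‖ * (M * ‖z‖) := by
        gcongr
        have hM : ‖adjoint (T (c - s))‖ ≤ M := by simpa using hT_bdd _ (const_sub_mem_Icc hs)
        exact (adjoint (T (c - s))).le_of_opNorm_le hM z

theorem memLp_adjointOutput (hT_cont : ∀ z : X, ContinuousOn (fun t => T t z) (Icc 0 (c - a)))
    (hT_bdd : ∀ t ∈ Icc (0 : ℝ) (c - a), ‖T t‖ ≤ M) (z : X) :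
    MemLp (adjointOutput T B c z) 2 (volume.restrict (Icc a c)) :=
  .of_bound (aestronglyMeasurable_adjointOutput hT_cont z) _
    ((ae_restrict_iff' measurableSet_Icc).2 (ae_of_all _ fun _ => norm_adjointOutput_le hT_bdd z))

theorem intervalIntegrable_gramian_integrand (hac : a ≤ c)
    (hT_cont : ∀ z : X, ContinuousOn (fun t => T t z) (Icc 0 (c - a)))
    (hT_bdd : ∀ t ∈ Icc (0 : ℝ) (c - a), ‖T t‖ ≤ M) (z : X) :
    IntervalIntegrable (fun s => T (c - s) (B (adjointOutput T B c z s))) volume a c := by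
  have hmeas : AEStronglyMeasurable (fun s => T (c - s) (B (adjointOutput T B c z s)))
      (volume.restrict (Icc a c)) :=
    aestronglyMeasurable_apply_of_continuous (F := fun s y => T (c - s) (B y))
      (fun y => (continuousOn_apply_const_sub hT_cont (B y)).aestronglyMeasurable measurableSet_Icc)
      (fun s => by fun_prop) (aestronglyMeasurable_adjointOutput hT_cont z)
  have hint : IntegrableOn (fun s => T (c - s) (B (adjointOutput T B c z s))) (Icc a c) :=
    Integrable.of_bound (μ := volume.restrict (Icc a c)) hmeas (M * (‖B‖ * (‖B‖ * (M * ‖z‖)))) <|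
      (ae_restrict_iff' measurableSet_Icc).2 <| ae_of_all _ fun s hs => by
        have hM : ‖T (c - s)‖ ≤ M := hT_bdd _ (const_sub_mem_Icc hs)
        refine (T (c - s)).le_of_opNorm_le_of_le hM ?_
        exact B.le_of_opNorm_le_of_le le_rfl (norm_adjointOutput_le hT_bdd z hs)
  exact (intervalIntegrable_iff_integrableOn_Icc_of_le hac).2 hint

theorem inner_apply_eq_integral_inner_adjointOutput (hac : a ≤ c)
    (hT_cont : ∀ z : X, ContinuousOn (fun t => T t z) (Icc 0 (c - a)))
    (hT_bdd : ∀ t ∈ Icc (0 : ℝ) (c - a), ‖T t‖ ≤ M)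
    (hΨ : ∀ z, Ψ z = ∫ s in a..c, T (c - s) (B (adjointOutput T B c z s))) (x z : X) :
    ⟪x, Ψ z⟫_ℝ = ∫ s in a..c, ⟪adjointOutput T B c x s, adjointOutput T B c z s⟫_ℝ := by
  rw [hΨ z, intervalIntegral.integral_of_le hac, intervalIntegral.integral_of_le hac,
    ← integral_inner (intervalIntegrable_gramian_integrand hac hT_cont hT_bdd z).1]
  simp only [adjointOutput, ContinuousLinearMap.adjoint_inner_left]

theorem isPositive_of_eq_integral (hac : a ≤ c)
    (hT_cont : ∀ z : X, ContinuousOn (fun t => T t z) (Icc 0 (c - a)))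
    (hT_bdd : ∀ t ∈ Icc (0 : ℝ) (c - a), ‖T t‖ ≤ M)
    (hΨ : ∀ z, Ψ z = ∫ s in a..c, T (c - s) (B (adjointOutput T B c z s))) : Ψ.IsPositive := by
  have hinner := inner_apply_eq_integral_inner_adjointOutput hac hT_cont hT_bdd hΨ
  refine (Ψ.isPositive_iff).2 ⟨fun x y => ?_, fun x => ?_⟩
  · simp only [ContinuousLinearMap.coe_coe]
    rw [real_inner_comm, hinner, hinner]
    exact intervalIntegral.integral_congr fun s _ => real_inner_comm _ _
  · rw [real_inner_comm, hinner]
    exact intervalIntegral.integral_nonneg hac fun s _ => real_inner_self_nonneg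

theorem adjointOutput_ae_eq_zero_of_apply_eq_zero (hac : a ≤ c)
    (hT_cont : ∀ z : X, ContinuousOn (fun t => T t z) (Icc 0 (c - a)))
    (hT_bdd : ∀ t ∈ Icc (0 : ℝ) (c - a), ‖T t‖ ≤ M)
    (hΨ : ∀ z, Ψ z = ∫ s in a..c, T (c - s) (B (adjointOutput T B c z s))) {z : X}
    (hz : Ψ z = 0) : adjointOutput T B c z =ᵐ[volume.restrict (Icc a c)] 0 := by
  have h := inner_apply_eq_integral_inner_adjointOutput hac hT_cont hT_bdd hΨ z z
  simp only [hz, inner_zero_right, real_inner_self_eq_norm_sq,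
    intervalIntegral.integral_of_le hac, ← integral_Icc_eq_integral_Ioc] at h
  have hsq := (integral_eq_zero_iff_of_nonneg (fun _ => sq_nonneg _)
    ((memLp_adjointOutput hT_cont hT_bdd z).integrable_norm_pow two_ne_zero)).1 h.symm
  filter_upwards [hsq] with s hs
  simpa using hs

theorem inner_integral_eq_zero_of_adjointOutput_ae_eq_zero (hac : a ≤ c) {z : X}
    (hz : adjointOutput T B c z =ᵐ[volume.restrict (Icc a c)] 0) (u : ℝ → U) :
    ⟪z, ∫ s in a..c, T (c - s) (B (u s))⟫_ℝ = 0 := by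
  by_cases hint : IntervalIntegrable (fun s => T (c - s) (B (u s))) volume a c
  · rw [intervalIntegral.integral_of_le hac, ← integral_inner hint.1,
      ← integral_Icc_eq_integral_Ioc]
    refine integral_eq_zero_of_ae ?_
    filter_upwards [hz] with s hs
    rw [← ContinuousLinearMap.adjoint_inner_left,
      ← ContinuousLinearMap.adjoint_inner_left]
    exact (congrArg (⟪·, u s⟫_ℝ) hs).trans (inner_zero_left _)
  · rw [intervalIntegral.integral_undef hint, inner_zero_right]

def reachableSet (T : ℝ → X →L[ℝ] X) (B : U →L[ℝ] X) (a c : ℝ) : Set X :=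
  {y : X | ∃ u : ℝ → U, MemLp u 2 (volume.restrict (Icc a c)) ∧
    y = ∫ s in a..c, T (c - s) (B (u s))}

theorem dense_reachableSet_iff_injective (hac : a ≤ c)
    (hT_cont : ∀ z : X, ContinuousOn (fun t => T t z) (Icc 0 (c - a)))
    (hT_bdd : ∀ t ∈ Icc (0 : ℝ) (c - a), ‖T t‖ ≤ M)
    (hΨ : ∀ z, Ψ z = ∫ s in a..c, T (c - s) (B (adjointOutput T B c z s))) :
    Dense (reachableSet T B a c) ↔ Function.Injective Ψ := by
  constructor
  · refine fun hdense => (injective_iff_map_eq_zero Ψ).2 fun z hz => ?_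
    refine hdense.eq_zero_of_inner_left ℝ ?_
    rintro _ ⟨u, -, rfl⟩
    exact inner_integral_eq_zero_of_adjointOutput_ae_eq_zero hac
      (adjointOutput_ae_eq_zero_of_apply_eq_zero hac hT_cont hT_bdd hΨ hz) u
  · refine fun hinj => Dense.mono ?_ ((isPositive_of_eq_integral hac hT_cont hT_bdd
      hΨ).isSelfAdjoint.denseRange_of_injective hinj)
    rintro _ ⟨z, rfl⟩
    exact ⟨adjointOutput T B c z, memLp_adjointOutput hT_cont hT_bdd z, hΨ z⟩

end ControlSystem

end ControllabilityGramian

/-- Characterization of approximate controllability of the linear system: the reachable set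
`{∫_a^c T(c-s) B u(s) ds : u ∈ L²([a,c], U)}` is dense in `X` if and only if
`λ (λI + Ψ)⁻¹ → 0` in the strong operator topology as `λ → 0⁺`, where
`Ψ = ∫_a^c T(c-s) B B* T(c-s)* ds` is the controllability Gramian. -/
theorem linear_approx_controllability_iff_resolvent_tendsto_zero
    {X U : Type*}
    [NormedAddCommGroup X] [InnerProductSpace ℝ X] [CompleteSpace X]
    [NormedAddCommGroup U] [InnerProductSpace ℝ U] [CompleteSpace U]
    (a c : ℝ) (hac : a < c) (M : ℝ)
    (T : ℝ → X →L[ℝ] X)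
    (hT_cont : ∀ z : X, ContinuousOn (fun t => T t z) (Set.Icc 0 (c - a)))
    (hT_bdd : ∀ t ∈ Set.Icc (0:ℝ) (c - a), ‖T t‖ ≤ M)
    (B : U →L[ℝ] X)
    -- the controllability Gramian Ψ and its resolvent family R l = (l I + Ψ)⁻¹
    (Ψ : X →L[ℝ] X)
    (hΨ : ∀ z : X, Ψ z = ∫ s in a..c,
      T (c - s) (B ((ContinuousLinearMap.adjoint B)
        ((ContinuousLinearMap.adjoint (T (c - s))) z))))
    (R : ℝ → X →L[ℝ] X)
    (hR : ∀ l : ℝ, 0 < l →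
      (l • ContinuousLinearMap.id ℝ X + Ψ).comp (R l) = ContinuousLinearMap.id ℝ X ∧
      (R l).comp (l • ContinuousLinearMap.id ℝ X + Ψ) = ContinuousLinearMap.id ℝ X) :
    Dense {y : X | ∃ u : ℝ → U,
        MemLp u 2 (volume.restrict (Set.Icc a c)) ∧
        y = ∫ s in a..c, T (c - s) (B (u s))}
      ↔ ∀ z : X, Filter.Tendsto (fun l : ℝ => l • (R l z)) (𝓝[>] 0) (𝓝 0) := by
  have hright : ∀ l > 0, ∀ y, l • R l y + Ψ (R l y) = y := fun l hl y => by
    simpa using DFunLike.congr_fun (hR l hl).1 y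
  have hleft : ∀ l > 0, ∀ x, R l (l • x + Ψ x) = x := fun l hl x => by
    simpa using DFunLike.congr_fun (hR l hl).2 x
  exact (dense_reachableSet_iff_injective hac.le hT_cont hT_bdd hΨ).trans
    (tendsto_smul_resolvent_iff_injective
      (isPositive_of_eq_integral hac.le hT_cont hT_bdd hΨ) hright hleft).symm
end
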